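/- arXiv:1408.1491 — 4 statements merged into one kernel-verified Lean document; each statement's English description precedes it below -/
import Mathlib

section
/- Let K be a field and let 𝔤 be a finite-dimensional nilpotent Lie algebra over K satisfying the condition 𝒜(n), i.e. every abelian Lie subalgebra of 𝔤 has dimension at most n. Then 2 · dim 𝔤 ≤ n(n+1). -/
open Module

section Aux

variable {K : Type*} [Field K]

/-- Between `U < W` there is a hyperplane `W'` of `W` containing `U`. -/
lemma aux_hyperplane {V : Type*} [AddCommGroup V] [Module K V] [FiniteDimensional K V]
    (U W : Submodule K V) (h : U < W) :
    ∃ W' : Submodule K V, U ≤ W' ∧ W' ≤ W ∧ finrank K W' + 1 = finrank K W ∧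
      ∃ e ∈ W, W ≤ W' ⊔ K ∙ e := by
  suffices h' : ∀ (d : ℕ) (U : Submodule K V), U < W → finrank K W - finrank K U = d →
      ∃ W' : Submodule K V, U ≤ W' ∧ W' ≤ W ∧ finrank K W' + 1 = finrank K W ∧
        ∃ e ∈ W, W ≤ W' ⊔ K ∙ e from h' _ U h rfl
  intro d
  induction d using Nat.strong_induction_on with
  | _ d ih =>
  intro U h hd
  obtain ⟨e, heW, heU⟩ := SetLike.exists_of_lt h
  have hUe : U < U ⊔ K ∙ e := by
    refine lt_of_le_of_ne le_sup_left fun hEq => heU ?_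
    rw [hEq]
    exact Submodule.mem_sup_right (Submodule.mem_span_singleton_self e)
  have hUeW : U ⊔ (K ∙ e) ≤ W := sup_le h.le ((Submodule.span_singleton_le_iff_mem e W).mpr heW)
  have hfin : finrank K ↥(U ⊔ K ∙ e) ≤ finrank K U + 1 := by
    have := Submodule.finrank_sup_add_finrank_inf_eq U (K ∙ e)
    have h1 : finrank K ↥(K ∙ e) ≤ 1 :=
      le_of_eq (finrank_span_singleton (fun h0 => heU (h0 ▸ U.zero_mem)))
    omega
  by_cases hEq : U ⊔ (K ∙ e) = W
  · refine ⟨U, le_rfl, h.le, ?_, e, heW, hEq.ge⟩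
    have h2 : finrank K U < finrank K ↥(U ⊔ K ∙ e) :=
      Submodule.finrank_lt_finrank_of_lt hUe
    rw [hEq] at h2 hfin
    omega
  · have hlt : U ⊔ (K ∙ e) < W := lt_of_le_of_ne hUeW hEq
    have h2 : finrank K U < finrank K ↥(U ⊔ K ∙ e) :=
      Submodule.finrank_lt_finrank_of_lt hUe
    have h3 : finrank K ↥(U ⊔ K ∙ e) < finrank K W := Submodule.finrank_lt_finrank_of_lt hlt
    obtain ⟨W', hUW', hW'W, hfr, hex⟩ :=
      ih (finrank K W - finrank K ↥(U ⊔ K ∙ e)) (by omega) _ hlt rfl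
    exact ⟨W', le_trans le_sup_left hUW', hW'W, hfr, hex⟩

end Aux

section LieAux

variable {K : Type*} [Field K] {L : Type*} [LieRing L] [LieAlgebra K L]
variable {M : Type*} [AddCommGroup M] [Module K M] [LieRingModule L M] [LieModule K L M]

/-- In a nilpotent Lie module, a nonzero invariant subspace `W` admits a hyperplane `W'`
(invariant as well) with `⁅L, W⁆ ⊆ W'`. -/
lemma aux_step [FiniteDimensional K M] [LieModule.IsNilpotent L M]
    (W : Submodule K M) (hW : ∀ (x : L), ∀ v ∈ W, ⁅x, v⁆ ∈ W) (hne : W ≠ ⊥) :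
    ∃ (W' : Submodule K M) (e : M), W' ≤ W ∧ finrank K W' + 1 = finrank K W ∧
      e ∈ W ∧ W ≤ W' ⊔ (K ∙ e) ∧ ∀ (x : L), ∀ v ∈ W, ⁅x, v⁆ ∈ W' := by
  let N : LieSubmodule K L M :=
    { toSubmodule := W
      lie_mem := fun {x v} hv => hW x v hv }
  have hNW : (N : Submodule K M) = W := rfl
  have hBN : ⁅(⊤ : LieIdeal K L), N⁆ ≤ N := LieSubmodule.lie_le_right N ⊤
  have hBne : ⁅(⊤ : LieIdeal K L), N⁆ ≠ N := by
    intro hEq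
    have hle : ∀ k, N ≤ LieModule.lowerCentralSeries K L M k := by
      intro k
      induction k with
      | zero => simp
      | succ k ihk =>
        rw [LieModule.lowerCentralSeries_succ]
        calc N = ⁅(⊤ : LieIdeal K L), N⁆ := hEq.symm
        _ ≤ _ := LieSubmodule.mono_lie_right _ ihk
    obtain ⟨k, hk⟩ := LieModule.IsNilpotent.nilpotent K L M
    have hNbot : N = ⊥ := le_bot_iff.mp (hk ▸ hle k)
    apply hne
    rw [← hNW, hNbot]
    exact LieSubmodule.bot_toSubmodule
  have hlt : (↑⁅(⊤ : LieIdeal K L), N⁆ : Submodule K M) < W := by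
    rw [← hNW]
    exact lt_of_le_of_ne (LieSubmodule.toSubmodule_le_toSubmodule _ _ |>.mpr hBN)
      (fun hc => hBne (LieSubmodule.toSubmodule_injective hc))
  obtain ⟨W', hUW', hW'W, hfrW, e, heW, hspan⟩ := aux_hyperplane _ W hlt
  refine ⟨W', e, hW'W, hfrW, heW, hspan, fun x v hv => hUW' ?_⟩
  exact LieSubmodule.lie_mem_lie (LieSubmodule.mem_top x) (show v ∈ N from hv)

/-- Existence of a flag adapted to the action, inside an invariant subspace. -/
lemma aux_chain [FiniteDimensional K M] [LieModule.IsNilpotent L M]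
    (W₀ : Submodule K M) (hW₀ : ∀ (x : L), ∀ v ∈ W₀, ⁅x, v⁆ ∈ W₀) :
    ∃ (W : ℕ → Submodule K M) (e : ℕ → M), W 0 = W₀ ∧
      (∀ j, finrank K (W j) = finrank K W₀ - j) ∧
      (∀ j, e j ∈ W j) ∧
      (∀ j, W j ≤ W (j + 1) ⊔ K ∙ e j) ∧
      (∀ (x : L) (j), ∀ v ∈ W j, ⁅x, v⁆ ∈ W (j + 1)) := by
  suffices h' : ∀ (m : ℕ) (W₀ : Submodule K M), (∀ (x : L), ∀ v ∈ W₀, ⁅x, v⁆ ∈ W₀) →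
      finrank K W₀ = m →
      ∃ (W : ℕ → Submodule K M) (e : ℕ → M), W 0 = W₀ ∧
        (∀ j, finrank K (W j) = finrank K W₀ - j) ∧
        (∀ j, e j ∈ W j) ∧
        (∀ j, W j ≤ W (j + 1) ⊔ K ∙ e j) ∧
        (∀ (x : L) (j), ∀ v ∈ W j, ⁅x, v⁆ ∈ W (j + 1)) from h' _ W₀ hW₀ rfl
  intro m
  induction m using Nat.strong_induction_on with
  | _ m ih =>
  intro W₀ hW₀ hm
  by_cases hbot : W₀ = ⊥
  · subst hbot
    refine ⟨fun _ => ⊥, fun _ => 0, rfl, ?_, fun j => Submodule.zero_mem ⊥, fun j => bot_le,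
      fun x j v hv => ?_⟩
    · intro j
      simp [finrank_bot]
    · have hv0 : v = 0 := by simpa using hv
      simp [hv0]
  · obtain ⟨W₁, e₀, hW₁W, hfr, he₀, hsp, hbr⟩ := aux_step W₀ hW₀ hbot
    have hW₁inv : ∀ (x : L), ∀ v ∈ W₁, ⁅x, v⁆ ∈ W₁ := fun x v hv => hbr x v (hW₁W hv)
    have hfrlt : finrank K W₁ < m := by omega
    obtain ⟨W, e, hW0, hfrs, hes, hsps, hbrs⟩ := ih (finrank K W₁) hfrlt W₁ hW₁inv rfl
    refine ⟨fun j => Nat.casesOn j W₀ W, fun j => Nat.casesOn j e₀ e, rfl, ?_, ?_, ?_, ?_⟩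
    · intro j
      cases j with
      | zero => simp
      | succ j => have := hfrs j; simp only [Nat.casesOn]; omega
    · intro j
      cases j with
      | zero => exact he₀
      | succ j => exact hes j
    · intro j
      cases j with
      | zero => show W₀ ≤ W 0 ⊔ (K ∙ e₀); rw [hW0]; exact hsp
      | succ j => exact hsps j
    · intro x j v hv
      cases j with
      | zero => show ⁅x, v⁆ ∈ W 0; rw [hW0]; exact hbr x v hv
      | succ j => exact hbrs x j v hv

/-- Key dimension bound for a nilpotent module. -/
lemma aux_module_bound [FiniteDimensional K M] [FiniteDimensional K L]
    [LieModule.IsNilpotent L M] :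
    2 * finrank K L ≤ 2 * finrank K (LinearMap.ker (LieModule.toEnd K L M : L →ₗ[K] Module.End K M))
      + finrank K M * (finrank K M - 1) := by
  classical
  obtain ⟨W, e, hW0, hfr', he, hsp, hbr⟩ :=
    aux_chain (K := K) (L := L) (⊤ : Submodule K M) (fun _ _ _ => Submodule.mem_top)
  set m := finrank K M with hm
  have hfr : ∀ j, finrank K (W j) = m - j := by
    intro j
    rw [hfr' j, finrank_top]
  -- the linear map sending `x` to the tuple `(⁅x, e j⁆)ⱼ`
  have hbrmem : ∀ (j : Fin m) (x : L), ⁅x, e j.val⁆ ∈ W (j.val + 1) :=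
    fun j x => hbr x j.val (e j.val) (he j.val)
  let φ : ∀ j : Fin m, L →ₗ[K] ↥(W (j.val + 1)) := fun j =>
    LinearMap.codRestrict (W (j.val + 1))
      { toFun := fun x => ⁅x, e j.val⁆
        map_add' := fun a b => add_lie a b (e j.val)
        map_smul' := fun c a => smul_lie c a (e j.val) }
      (fun x => hbrmem j x)
  let ψ : L →ₗ[K] ∀ j : Fin m, ↥(W (j.val + 1)) := LinearMap.pi φ
  -- the kernel of `ψ` is contained in the kernel of the action
  have hWbot : ∀ j, m ≤ j → W j = ⊥ := by
    intro j hj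
    have h0 : finrank K (W j) = 0 := by rw [hfr j]; omega
    exact Submodule.finrank_eq_zero.mp h0
  have htop : (⊤ : Submodule K M) ≤ Submodule.span K (Set.range e) := by
    have h1 : ∀ k, (⊤ : Submodule K M) ≤ W k ⊔ Submodule.span K (Set.range e) := by
      intro k
      induction k with
      | zero => rw [hW0]; exact le_sup_left
      | succ k ihk =>
        refine ihk.trans (sup_le ((hsp k).trans (sup_le le_sup_left ?_)) le_sup_right)
        exact le_trans (Submodule.span_mono (Set.singleton_subset_iff.mpr (Set.mem_range_self k))) le_sup_right
    have h2 := h1 m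
    rwa [hWbot m le_rfl, bot_sup_eq] at h2
  have hker : LinearMap.ker ψ ≤ LinearMap.ker (LieModule.toEnd K L M : L →ₗ[K] Module.End K M) := by
    intro x hx
    rw [LinearMap.mem_ker] at hx ⊢
    have hxe : ∀ j : ℕ, ⁅x, e j⁆ = 0 := by
      intro j
      by_cases hj : j < m
      · have h3 := congrFun hx ⟨j, hj⟩
        exact congrArg Subtype.val h3
      · have h4 : e j ∈ (⊥ : Submodule K M) := (hWbot j (by omega)) ▸ he j
        rw [(Submodule.mem_bot K).mp h4, lie_zero]
    ext v
    have hv : v ∈ Submodule.span K (Set.range e) := htop Submodule.mem_top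
    rw [LinearMap.zero_apply]
    induction hv using Submodule.span_induction with
    | mem w hw =>
      obtain ⟨j, rfl⟩ := hw
      exact hxe j
    | zero => exact map_zero _
    | add a b _ _ ha hb => rw [map_add, ha, hb, add_zero]
    | smul c a _ ha => rw [map_smul, ha, smul_zero]
  -- rank-nullity and dimension count
  have hrn := LinearMap.finrank_range_add_finrank_ker ψ
  have hk := Submodule.finrank_mono hker
  have hr : finrank K ↥(LinearMap.range ψ) ≤ ∑ j : Fin m, finrank K ↥(W (j.val + 1)) := by
    refine le_trans (Submodule.finrank_le _) ?_
    rw [Module.finrank_pi_fintype]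
  have hsum : (∑ j : Fin m, finrank K ↥(W (j.val + 1))) * 2 = m * (m - 1) := by
    have h5 : (∑ j : Fin m, finrank K ↥(W (j.val + 1))) = ∑ j ∈ Finset.range m, (m - 1 - j) := by
      rw [Fin.sum_univ_eq_sum_range (fun j => finrank K ↥(W (j + 1)))]
      exact Finset.sum_congr rfl (fun j _ => by rw [hfr (j + 1)]; omega)
    rw [h5, Finset.sum_range_reflect (fun i => i) m, Finset.sum_range_id_mul_two]
  omega

end LieAux

/-- If `𝔤` is a finite-dimensional nilpotent Lie algebra over a field `K` in which every
abelian Lie subalgebra has dimension at most `n`, then `2 · dim 𝔤 ≤ n(n+1)`. -/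
theorem dim_le_of_nilpotent_lie_algebra
    (K : Type*) [Field K] (L : Type*) [LieRing L] [LieAlgebra K L]
    [FiniteDimensional K L] [LieRing.IsNilpotent L] (n : ℕ)
    (hA : ∀ H : LieSubalgebra K L, IsLieAbelian H → Module.finrank K H ≤ n) :
    2 * Module.finrank K L ≤ n * (n + 1) := by
  classical
  -- Choose an abelian ideal of maximal dimension.
  obtain ⟨d, I, hIab, hId, hImax⟩ : ∃ (d : ℕ) (I : LieIdeal K L), IsLieAbelian I ∧
      finrank K I = d ∧ ∀ J : LieIdeal K L, IsLieAbelian J → finrank K J ≤ d := by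
    have habbot : IsLieAbelian (⊥ : LieIdeal K L) := by
      constructor
      intro a b
      have hb : (b : L) = 0 := (LieSubmodule.mem_bot _).mp b.property
      apply Subtype.ext
      rw [LieIdeal.coe_bracket_of_module, LieSubmodule.coe_bracket, hb, lie_zero]
      rfl
    have hne : Set.Nonempty {d | ∃ J : LieIdeal K L, IsLieAbelian J ∧ finrank K J = d} :=
      ⟨_, ⊥, habbot, rfl⟩
    have hbdd : BddAbove {d | ∃ J : LieIdeal K L, IsLieAbelian J ∧ finrank K J = d} := by
      refine ⟨finrank K L, ?_⟩
      rintro d ⟨J, -, rfl⟩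
      exact Submodule.finrank_le J.toSubmodule
    obtain ⟨J, hJab, hJd⟩ := Nat.sSup_mem hne hbdd
    exact ⟨_, J, hJab, hJd, fun J' hJ' => le_csSup hbdd ⟨J', hJ', rfl⟩⟩
  have habel : ∀ x ∈ I, ∀ y ∈ I, ⁅x, y⁆ = (0 : L) := by
    intro x hx y hy
    have h := trivial_lie_zero _ _ (⟨x, hx⟩ : I) (⟨y, hy⟩ : I)
    have h2 := congrArg Subtype.val h
    rwa [LieIdeal.coe_bracket_of_module, LieSubmodule.coe_bracket] at h2
  -- The centralizer of `I`.
  let C : LieIdeal K L :=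
    { carrier := {x : L | ∀ y ∈ I, ⁅x, y⁆ = 0}
      add_mem' := fun {a b} ha hb y hy => by rw [add_lie, ha y hy, hb y hy, add_zero]
      zero_mem' := fun y hy => zero_lie y
      smul_mem' := fun c x hx y hy => by rw [smul_lie, hx y hy, smul_zero]
      lie_mem := fun {x z} hz y hy => by
        rw [lie_lie, hz y hy, lie_zero, zero_sub, neg_eq_zero]
        exact hz _ (I.lie_mem hy) }
  have hmemC : ∀ x : L, x ∈ C ↔ ∀ y ∈ I, ⁅x, y⁆ = 0 := fun x => Iff.rfl
  have hIC : I ≤ C := fun {x} hx => fun y hy => habel x hx y hy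
  -- The centralizer equals `I`.
  have hCI : C ≤ I := by
    by_contra hC
    obtain ⟨z₀, hz₀C, hz₀I⟩ : ∃ z₀, z₀ ∈ C ∧ z₀ ∉ I := by
      obtain ⟨z₀, h1, h2⟩ := SetLike.not_le_iff_exists.mp hC
      exact ⟨z₀, h1, h2⟩
    -- pass to the quotient `L ⧸ I`
    haveI hnilQ : LieModule.IsNilpotent L (L ⧸ I) := by
      refine Function.Surjective.lieModuleIsNilpotent (f := (LieHom.id : L →ₗ⁅K⁆ L))
        (g := (LieSubmodule.Quotient.mk' I).toLinearMap) (fun x m => ?_) (fun x => ⟨x, rfl⟩)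
        (LieSubmodule.Quotient.surjective_mk' I)
      exact ((LieSubmodule.Quotient.mk' I).map_lie x m).symm
    set Cbar : LieSubmodule K L (L ⧸ I) := LieSubmodule.map (LieSubmodule.Quotient.mk' I) C
      with hCbar
    haveI : Nontrivial Cbar := by
      refine nontrivial_of_ne ⟨LieSubmodule.Quotient.mk' I z₀, ?_⟩ 0 ?_
      · exact (LieSubmodule.mem_map _).mpr ⟨z₀, hz₀C, rfl⟩
      · intro hEq
        apply hz₀I
        have h3 : LieSubmodule.Quotient.mk' I z₀ = 0 := congrArg Subtype.val hEq
        exact (LieSubmodule.Quotient.mk_eq_zero I).mp h3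
    haveI : LieModule.IsNilpotent L Cbar := by
      rw [LieSubmodule.isNilpotent_iff_exists_self_le_ucs]
      obtain ⟨k, hk⟩ := (LieModule.isNilpotent_iff_exists_ucs_eq_top K).mp hnilQ
      exact ⟨k, hk ▸ le_top⟩
    haveI := LieModule.nontrivial_max_triv_of_isNilpotent K L Cbar
    obtain ⟨t, ht⟩ :=
      exists_ne (0 : LieModule.maxTrivSubmodule K L Cbar)
    obtain ⟨z, hzC, hz⟩ := (LieSubmodule.mem_map _).mp (t : Cbar).property
    have hzI : z ∉ I := by
      intro hzI
      apply ht
      have h4 : LieSubmodule.Quotient.mk' I z = 0 := (LieSubmodule.Quotient.mk_eq_zero I).mpr hzI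
      have h5 : ((t : Cbar) : L ⧸ I) = 0 := by rw [← hz, h4]
      exact Subtype.ext (Subtype.ext h5)
    have hzLI : ∀ x : L, ⁅x, z⁆ ∈ I := by
      intro x
      have h6 : ⁅x, (t : Cbar)⁆ = 0 := (t.property x : _)
      have h7 : ((⁅x, (t : Cbar)⁆ : Cbar) : L ⧸ I) = 0 := by rw [h6]; rfl
      rw [LieSubmodule.coe_bracket, ← hz] at h7
      have h8 : LieSubmodule.Quotient.mk' I ⁅x, z⁆ = 0 := by
        rw [← (LieSubmodule.Quotient.mk' I).map_lie x z] at h7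
        exact h7
      exact (LieSubmodule.Quotient.mk_eq_zero I).mp h8
    -- the enlarged abelian ideal
    have hzCmem : ∀ y ∈ I, ⁅z, y⁆ = (0 : L) := hzC
    let J : LieIdeal K L :=
      { toSubmodule := I.toSubmodule ⊔ (K ∙ z)
        lie_mem := fun {x y} hy => by
          obtain ⟨i, hi, w, hw, rfl⟩ := Submodule.mem_sup.mp hy
          obtain ⟨c, rfl⟩ := Submodule.mem_span_singleton.mp hw
          refine Submodule.mem_sup_left (show ⁅x, i + c • z⁆ ∈ I from ?_)
          rw [lie_add, lie_smul]
          exact I.add_mem (I.lie_mem hi) (Submodule.smul_mem _ c (hzLI x)) }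
    have hJab : IsLieAbelian J := by
      constructor
      intro a b
      apply Subtype.ext
      rw [LieIdeal.coe_bracket_of_module, LieSubmodule.coe_bracket]
      obtain ⟨i, hi, w, hw, ha⟩ := Submodule.mem_sup.mp a.property
      obtain ⟨c, rfl⟩ := Submodule.mem_span_singleton.mp hw
      obtain ⟨i', hi', w', hw', hb⟩ := Submodule.mem_sup.mp b.property
      obtain ⟨c', rfl⟩ := Submodule.mem_span_singleton.mp hw'
      have e1 : ⁅i, i'⁆ = (0 : L) := habel i hi i' hi'
      have e2 : ⁅i, c' • z⁆ = (0 : L) := by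
        rw [lie_smul, ← lie_skew, hzCmem i hi, neg_zero, smul_zero]
      have e3 : ⁅(c • z : L), i'⁆ = (0 : L) := by
        rw [smul_lie, hzCmem i' hi', smul_zero]
      have e4 : ⁅(c • z : L), c' • z⁆ = (0 : L) := by
        rw [smul_lie, lie_smul, lie_self, smul_zero, smul_zero]
      rw [← ha, ← hb, add_lie, lie_add, lie_add, e1, e2, e3, e4]
      simp
    have hlt : I.toSubmodule < J.toSubmodule := by
      refine lt_of_le_of_ne le_sup_left (fun hEq => hzI ?_)
      have : z ∈ J.toSubmodule := Submodule.mem_sup_right (Submodule.mem_span_singleton_self z)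
      rw [← hEq] at this
      exact this
    have h9 : finrank K I < finrank K J := Submodule.finrank_lt_finrank_of_lt hlt
    have h10 := hImax J hJab
    omega
  -- Now apply the dimension bound to the module `I`.
  haveI hfd : FiniteDimensional K I := inferInstanceAs (FiniteDimensional K I.toSubmodule)
  haveI : LieModule.IsNilpotent L I := by
    rw [LieSubmodule.isNilpotent_iff_exists_self_le_ucs]
    obtain ⟨k, hk⟩ :=
      (LieModule.isNilpotent_iff_exists_ucs_eq_top K).mp (inferInstance : LieModule.IsNilpotent L L)
    exact ⟨k, hk ▸ le_top⟩
  have hbound := aux_module_bound (K := K) (L := L) (M := I)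
  have hkerC : LinearMap.ker (LieModule.toEnd K L I : L →ₗ[K] Module.End K I) = I.toSubmodule := by
    ext x
    rw [LinearMap.mem_ker]
    constructor
    · intro h
      refine hCI ?_
      intro y hy
      have h1 := DFunLike.congr_fun h (⟨y, hy⟩ : I)
      simp only [LieHom.coe_toLinearMap, LieModule.toEnd_apply_apply,
        LinearMap.zero_apply] at h1
      have h2 := congrArg Subtype.val h1
      rw [LieSubmodule.coe_bracket] at h2
      simpa using h2
    · intro hx
      ext v
      simp only [LieHom.coe_toLinearMap, LieModule.toEnd_apply_apply, LinearMap.zero_apply]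
      rw [LieSubmodule.coe_bracket, ZeroMemClass.coe_zero]
      exact hIC hx (v : L) v.property
  have hId' : finrank K I.toSubmodule = d := hId
  rw [hkerC, hId'] at hbound
  rw [hId] at hbound
  have hIn : d ≤ n := by
    rw [← hId]
    exact hA (I : LieSubalgebra K L) hIab
  have harith : 2 * d + d * (d - 1) = d * (d + 1) := by
    cases d with
    | zero => rfl
    | succ k => simp only [Nat.succ_sub_one]; ring
  have hfin : d * (d + 1) ≤ n * (n + 1) := Nat.mul_le_mul hIn (by omega)
  omega
end

section
/- Let K be a field and let A be a finite-dimensional nilpotent associative (possibly non-unital) algebra over K, i.e. there exists a positive integer m such that every product of m elements of A is zero. If every commutative (non-unital) subalgebra of A has dimension at most n, then 2 · dim A ≤ n(n+1). -/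
open Module

section Aux

variable {K A : Type*} [Field K] [NonUnitalRing A] [Module K A]
    [SMulCommClass K A A] [IsScalarTower K A A]

lemma foldl_mul_left' (l : List A) (a x : A) :
    a * l.foldl (· * ·) x = l.foldl (· * ·) (a * x) := by
  induction l generalizing x with
  | nil => rfl
  | cons b l ih =>
    rw [List.foldl_cons, List.foldl_cons, ih, ← mul_assoc]

lemma mulRight_pow_apply' (a x : A) (k : ℕ) :
    ((LinearMap.mulRight K a) ^ k) x = (List.replicate k a).foldl (· * ·) x := by
  induction k generalizing x with
  | zero => simp
  | succ k ih =>
    rw [pow_succ, Module.End.mul_apply, List.replicate_succ, List.foldl_cons,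
      LinearMap.mulRight_apply, ih]

lemma mulLeft_pow_apply' (a x : A) (k : ℕ) :
    ((LinearMap.mulLeft K a) ^ (k + 1)) x = ((List.replicate k a).foldl (· * ·) a) * x := by
  induction k generalizing x with
  | zero => simp
  | succ k ih =>
    rw [pow_succ', Module.End.mul_apply, LinearMap.mulLeft_apply, ih, ← mul_assoc,
      foldl_mul_left', List.replicate_succ, List.foldl_cons]

end Aux

attribute [local instance 100] LieRing.ofAssociativeRing

lemma exists_common_kernel_vector (K V : Type*) [Field K] [AddCommGroup V] [Module K V]
    [FiniteDimensional K V] [Nontrivial V] (D : Submodule K (Module.End K V))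
    (hbr : ∀ d ∈ D, ∀ e ∈ D, d * e - e * d ∈ D)
    (hn : ∀ d ∈ D, IsNilpotent d) :
    ∃ v : V, v ≠ 0 ∧ ∀ d ∈ D, d v = 0 := by
  let L : LieSubalgebra K (Module.End K V) :=
    { D with lie_mem' := fun {x y} hx hy => hbr x hx y hy }
  have hnilmod : LieModule.IsNilpotent L V := by
    apply LieAlgebra.isEngelian_of_isNoetherian (R := K) V
    intro x
    have : LieModule.toEnd K L V x = (x : Module.End K V) := by
      rw [LieSubalgebra.toEnd_eq, LieModule.toEnd_module_end]; rfl
    rw [this]; exact hn x x.2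
  have := LieModule.nontrivial_max_triv_of_isNilpotent K L V
  obtain ⟨⟨v, hv⟩, ⟨w, hw⟩, hvw⟩ := this
  rcases eq_or_ne (v : V) 0 with h0 | h0
  · refine ⟨w, ?_, fun d hd => hw ⟨d, hd⟩⟩
    intro h; apply hvw; ext; simp [h0, h]
  · exact ⟨v, h0, fun d hd => hv ⟨d, hd⟩⟩

lemma engel_dim_bound (K : Type*) [Field K] :
    ∀ (r : ℕ) (V : Type*) [AddCommGroup V] [Module K V] [FiniteDimensional K V],
    finrank K V = r →
    ∀ D : Submodule K (Module.End K V),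
    (∀ d ∈ D, ∀ e ∈ D, d * e - e * d ∈ D) → (∀ d ∈ D, IsNilpotent d) →
    2 * finrank K D ≤ r * (r - 1) := by
  intro r
  induction r using Nat.strong_induction_on with
  | _ r IH =>
  intro V _ _ _ hr D hbr hn
  rcases Nat.eq_zero_or_pos r with h0 | hpos
  · subst h0
    have : Subsingleton V := by
      rw [← Module.finrank_zero_iff (R := K)]; omega
    have : Subsingleton (Module.End K V) := inferInstance
    have hD : D = ⊥ := Subsingleton.elim _ _
    simp [hD]
  · have : Nontrivial V := by
      have := Module.nontrivial_of_finrank_pos (R := K) (M := V) (by omega)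
      exact this
    obtain ⟨v, hv0, hv⟩ := exists_common_kernel_vector K V D hbr hn
    set W : Submodule K V := K ∙ v with hW
    have hWrank : finrank K W = 1 := finrank_span_singleton hv0
    have hpres : ∀ d ∈ D, W ≤ W.comap d := by
      intro d hd x hx
      obtain ⟨c, rfl⟩ := Submodule.mem_span_singleton.mp hx
      simp only [Submodule.mem_comap, map_smul, hv d hd, smul_zero]
      exact W.zero_mem
    let ψ : D →ₗ[K] Module.End K (V ⧸ W) :=
      { toFun := fun d => Submodule.mapQ W W d.1 (hpres d.1 d.2)
        map_add' := by
          intro d e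
          apply Submodule.linearMap_qext
          ext x
          simp [Submodule.mapQ_apply]
        map_smul' := by
          intro c d
          apply Submodule.linearMap_qext
          ext x
          simp [Submodule.mapQ_apply] }
    have hψ_apply : ∀ (d : D) (x : V), ψ d (Submodule.Quotient.mk x)
        = Submodule.Quotient.mk (d.1 x) := by
      intro d x; rfl
    set D' := LinearMap.range ψ with hD'
    have hbr' : ∀ a ∈ D', ∀ b ∈ D', a * b - b * a ∈ D' := by
      rintro a ⟨d, rfl⟩ b ⟨e, rfl⟩
      have hmem : (d.1 * e.1 - e.1 * d.1 : Module.End K V) ∈ D := hbr d.1 d.2 e.1 e.2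
      refine ⟨⟨_, hmem⟩, ?_⟩
      apply Submodule.linearMap_qext
      ext x
      simp only [LinearMap.comp_apply, Submodule.mkQ_apply, Module.End.mul_apply,
        LinearMap.sub_apply, hψ_apply]
      rw [← Submodule.Quotient.mk_sub]
    have hn' : ∀ a ∈ D', IsNilpotent a := by
      rintro a ⟨d, rfl⟩
      obtain ⟨k, hk⟩ := hn d.1 d.2
      refine ⟨k, ?_⟩
      apply Submodule.linearMap_qext
      ext x
      have : ∀ (m : ℕ) (x : V), ((ψ d) ^ m) (Submodule.Quotient.mk x)
          = Submodule.Quotient.mk ((d.1 ^ m) x) := by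
        intro m
        induction m with
        | zero => intro x; simp
        | succ m ih =>
          intro x
          rw [pow_succ, pow_succ]
          simp only [Module.End.mul_apply]
          rw [hψ_apply, ih]
      simp [this k x, hk]
    have hfinquot : finrank K (V ⧸ W) = r - 1 := by
      have := Submodule.finrank_quotient_add_finrank W
      omega
    have hrange := IH (r - 1) (by omega) (V ⧸ W) hfinquot D' hbr' hn'
    have hker_range : ∀ d : LinearMap.ker ψ, ∀ x : V, d.1.1 x ∈ W := by
      rintro ⟨d, hd⟩ x
      have : ψ d (Submodule.Quotient.mk x) = 0 := by rw [hd]; rfl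
      rw [hψ_apply] at this
      simpa [Submodule.Quotient.mk_eq_zero] using this
    have hker_ker : ∀ d : LinearMap.ker ψ, ∀ x ∈ W, d.1.1 x = 0 := by
      rintro d x hx
      obtain ⟨c, rfl⟩ := Submodule.mem_span_singleton.mp hx
      simp [hv d.1.1 d.1.2]
    let χ : LinearMap.ker ψ →ₗ[K] ((V ⧸ W) →ₗ[K] W) :=
      { toFun := fun d => Submodule.liftQ W
          (LinearMap.codRestrict W d.1.1 (hker_range d))
          (fun x hx => LinearMap.mem_ker.mpr (Subtype.ext (by
            simp [hker_ker d x hx])))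
        map_add' := by
          intro d e
          apply Submodule.linearMap_qext
          ext x
          simp
        map_smul' := by
          intro c d
          apply Submodule.linearMap_qext
          ext x
          simp }
    have hχ_inj : Function.Injective χ := by
      intro d e hde
      ext x
      have h1 := congrArg (fun f => ((f (Submodule.Quotient.mk x) : W) : V)) hde
      simpa [χ, Submodule.liftQ_apply] using h1
    have hkerbound : finrank K (LinearMap.ker ψ) ≤ (r - 1) * 1 := by
      calc finrank K (LinearMap.ker ψ) ≤ finrank K ((V ⧸ W) →ₗ[K] W) :=
            LinearMap.finrank_le_finrank_of_injective hχ_inj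
        _ = (r - 1) * 1 := by rw [Module.finrank_linearMap, hfinquot, hWrank]
    have hrn := LinearMap.finrank_range_add_finrank_ker ψ
    have harith : (r - 1) * (r - 1 - 1) + 2 * ((r - 1) * 1) = (r - 1) * r := by
      obtain ⟨s, rfl⟩ : ∃ s, r = s + 1 := ⟨r - 1, by omega⟩
      cases s with
      | zero => simp
      | succ t => simp only [Nat.succ_sub_one]; ring
    have : finrank K D = finrank K D' + finrank K (LinearMap.ker ψ) := hrn.symm
    calc 2 * finrank K D = 2 * finrank K D' + 2 * finrank K (LinearMap.ker ψ) := by omega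
      _ ≤ (r - 1) * (r - 1 - 1) + 2 * ((r - 1) * 1) := by omega
      _ = (r - 1) * r := harith
      _ = r * (r - 1) := Nat.mul_comm _ _

/-- If `A` is a finite-dimensional nilpotent associative (possibly non-unital) algebra over a
field `K` (i.e. there is a positive integer `m` such that every product of `m` elements of `A`
vanishes) in which every commutative (non-unital) subalgebra has dimension at most `n`, then
`2 · dim A ≤ n(n+1)`. -/
theorem dim_le_of_nilpotent_associative_algebra
    (K : Type*) [Field K] (A : Type*) [NonUnitalRing A] [Module K A]
    [SMulCommClass K A A] [IsScalarTower K A A] [FiniteDimensional K A] (n : ℕ)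
    (hnil : ∃ m : ℕ, 0 < m ∧ ∀ (x : A) (l : List A), l.length + 1 = m →
      l.foldl (· * ·) x = 0)
    (hA : ∀ S : NonUnitalSubalgebra K A, (∀ x ∈ S, ∀ y ∈ S, x * y = y * x) →
      Module.finrank K S ≤ n) :
    2 * Module.finrank K A ≤ n * (n + 1) := by
  classical
  obtain ⟨t, ht0, htnil⟩ := hnil
  -- Step 1: any pairwise-commuting subspace has dimension at most n
  have lemma1 : ∀ p : Submodule K A, (∀ x ∈ p, ∀ y ∈ p, x * y = y * x) →
      finrank K p ≤ n := by
    intro p hp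
    set S := NonUnitalAlgebra.adjoin K (p : Set A) with hS
    have hcomm : ∀ x ∈ S, ∀ y ∈ S, x * y = y * x := by
      intro x hx y hy
      induction hx, hy using NonUnitalAlgebra.adjoin_induction₂ with
      | mem_mem a b ha hb => exact hp a ha b hb
      | zero_left x hx => simp
      | zero_right x hx => simp
      | add_left x y z hx hy hz h1 h2 => rw [add_mul, mul_add, h1, h2]
      | add_right x y z hx hy hz h1 h2 => rw [mul_add, add_mul, h1, h2]
      | mul_left x y z hx hy hz h1 h2 =>
          rw [mul_assoc, h2, ← mul_assoc, h1, mul_assoc]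
      | mul_right x y z hx hy hz h1 h2 =>
          rw [← mul_assoc, h1, mul_assoc, h2, ← mul_assoc]
      | smul_left r x y hx hy h => rw [smul_mul_assoc, mul_smul_comm, h]
      | smul_right r x y hx hy h => rw [mul_smul_comm, smul_mul_assoc, h]
    have h1 : finrank K p ≤ finrank K S.toSubmodule := by
      apply Submodule.finrank_mono
      intro x hx
      exact NonUnitalAlgebra.subset_adjoin K hx
    exact h1.trans (hA S hcomm)
  -- Step 2: products of length k
  set P : ℕ → Submodule K A := fun k =>
    Submodule.span K {y | ∃ (x : A) (l : List A), l.length + 1 = k ∧ y = l.foldl (· * ·) x}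
    with hPdef
  have hP1 : P 1 = ⊤ := by
    rw [eq_top_iff]
    intro x _
    exact Submodule.subset_span ⟨x, [], by simp, rfl⟩
  have hPt : P t = ⊥ := by
    rw [eq_bot_iff, hPdef]
    apply Submodule.span_le.mpr
    rintro y ⟨x, l, hl, rfl⟩
    simp [htnil x l hl]
  have hPmulR : ∀ k (a : A), ∀ p ∈ P k, p * a ∈ P (k + 1) := by
    intro k a p hp
    have hle : P k ≤ Submodule.comap (LinearMap.mulRight K a) (P (k + 1)) := by
      rw [hPdef]
      apply Submodule.span_le.mpr
      rintro y ⟨x, l, hl, rfl⟩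
      apply Submodule.subset_span
      refine ⟨x, l ++ [a], by simp [← hl], ?_⟩
      rw [List.foldl_append]
      rfl
    exact hle hp
  have hPmulL : ∀ k (a : A), ∀ p ∈ P k, a * p ∈ P (k + 1) := by
    intro k a p hp
    have hle : P k ≤ Submodule.comap (LinearMap.mulLeft K a) (P (k + 1)) := by
      rw [hPdef]
      apply Submodule.span_le.mpr
      rintro y ⟨x, l, hl, rfl⟩
      apply Submodule.subset_span
      refine ⟨a, x :: l, by simp [← hl], ?_⟩
      rw [List.foldl_cons, LinearMap.mulLeft_apply, foldl_mul_left']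
    exact hle hp
  -- Step 3: choose an abelian Lie ideal of maximal dimension
  set Abl : Submodule K A → Prop := fun p =>
    (∀ (a : A), ∀ m ∈ p, a * m - m * a ∈ p) ∧ ∀ x ∈ p, ∀ y ∈ p, x * y = y * x
    with hAbl
  set Srk : Set ℕ := {k | ∃ p, Abl p ∧ finrank K p = k} with hSrk
  have hS0 : 0 ∈ Srk := by
    refine ⟨⊥, ⟨?_, ?_⟩, finrank_bot K A⟩
    · intro a m hm
      rw [Submodule.mem_bot] at hm
      simp [hm]
    · intro x hx y hy
      rw [Submodule.mem_bot] at hx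
      simp [hx]
  have hSbdd : BddAbove Srk := by
    refine ⟨finrank K A, ?_⟩
    rintro k ⟨p, _, rfl⟩
    exact p.finrank_le
  obtain ⟨M, hMabl, hMrank⟩ : ∃ p, Abl p ∧ finrank K p = sSup Srk :=
    Nat.sSup_mem ⟨0, hS0⟩ hSbdd
  have hMmax : ∀ p : Submodule K A, Abl p → finrank K p ≤ finrank K M := by
    intro p hp
    rw [hMrank]
    exact le_csSup hSbdd ⟨p, hp, rfl⟩
  -- Step 4: the centralizer of M
  set Cent : Submodule K A :=
    { carrier := {x | ∀ y ∈ M, x * y = y * x}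
      add_mem' := fun {a b} ha hb y hy => by rw [add_mul, mul_add, ha y hy, hb y hy]
      zero_mem' := fun y hy => by rw [zero_mul, mul_zero]
      smul_mem' := fun c x hx y hy => by
        rw [smul_mul_assoc, mul_smul_comm, hx y hy] } with hCent
  have hCent_mem : ∀ x : A, x ∈ Cent ↔ ∀ y ∈ M, x * y = y * x := fun x => Iff.rfl
  have hMC : M ≤ Cent := by
    intro x hx
    rw [hCent_mem]
    intro y hy
    exact hMabl.2 x hx y hy
  have hCentStable : ∀ (a : A), ∀ c ∈ Cent, a * c - c * a ∈ Cent := by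
    intro a c hc
    rw [hCent_mem]
    intro y hy
    have e1 : c * y = y * c := hc y hy
    have e3 : c * (a * y) - c * (y * a) = (a * y) * c - (y * a) * c := by
      have := hc (a * y - y * a) (hMabl.1 a y hy)
      rwa [mul_sub, sub_mul] at this
    have key : a * c * y - c * a * y = y * a * c - y * c * a := by
      have h1 : a * c * y = a * y * c := by rw [mul_assoc, e1, ← mul_assoc]
      have h2 : y * c * a = c * y * a := by rw [← e1]
      rw [h1, h2, mul_assoc c a y, mul_assoc c y a]
      rw [sub_eq_sub_iff_sub_eq_sub]
      exact e3.symm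
    rw [sub_mul, mul_sub, ← mul_assoc y a c, ← mul_assoc y c a]
    exact key
  -- Step 5: the descending chain
  set CC : ℕ → Submodule K A := fun k => Nat.rec Cent
    (fun _ prev => M ⊔ Submodule.span K {z | ∃ a : A, ∃ c ∈ prev, z = a * c - c * a}) k
    with hCC
  have hCC0 : CC 0 = Cent := rfl
  have hCCsucc : ∀ k, CC (k + 1)
      = M ⊔ Submodule.span K {z | ∃ a : A, ∃ c ∈ CC k, z = a * c - c * a} := fun k => rfl
  have hCCbr : ∀ k (a : A), ∀ c ∈ CC k, a * c - c * a ∈ CC (k + 1) := by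
    intro k a c hc
    rw [hCCsucc]
    exact Submodule.mem_sup_right (Submodule.subset_span ⟨a, c, hc, rfl⟩)
  have hCC_cent : ∀ k, CC k ≤ Cent := by
    intro k
    induction k with
    | zero => exact le_rfl
    | succ k ih =>
      rw [hCCsucc]
      apply sup_le hMC
      apply Submodule.span_le.mpr
      rintro z ⟨a, c, hc, rfl⟩
      exact hCentStable a c (ih hc)
  have hCC_P : ∀ k, CC k ≤ M ⊔ P (k + 1) := by
    intro k
    induction k with
    | zero => rw [hP1, sup_top_eq]; exact le_top
    | succ k ih =>
      rw [hCCsucc]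
      apply sup_le (le_sup_left.trans le_rfl)
      apply Submodule.span_le.mpr
      rintro z ⟨a, c, hc, rfl⟩
      obtain ⟨m0, hm0, p0, hp0, rfl⟩ := Submodule.mem_sup.mp (ih hc)
      have hsplit : a * (m0 + p0) - (m0 + p0) * a
          = (a * m0 - m0 * a) + (a * p0 - p0 * a) := by
        simp only [mul_add, add_mul]
        abel
      rw [hsplit]
      apply Submodule.add_mem_sup (hMabl.1 a m0 hm0)
      exact Submodule.sub_mem _ (hPmulL _ a p0 hp0) (hPmulR _ a p0 hp0)
  -- Step 6: Cent = M
  have hex : ∃ k, CC k ≤ M := by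
    refine ⟨t - 1, ?_⟩
    have h1 := hCC_P (t - 1)
    rw [show t - 1 + 1 = t by omega, hPt, sup_bot_eq] at h1
    exact h1
  have hCent_le : Cent ≤ M := by
    by_contra hC
    have hk0 : CC (Nat.find hex) ≤ M := Nat.find_spec hex
    have hk0pos : Nat.find hex ≠ 0 := by
      intro h
      rw [h, hCC0] at hk0
      exact hC hk0
    obtain ⟨j, hj⟩ : ∃ j, Nat.find hex = j + 1 := ⟨Nat.find hex - 1, by omega⟩
    have hjlt : ¬ CC j ≤ M := Nat.find_min hex (by omega)
    obtain ⟨y, hyCCj, hyM⟩ := SetLike.not_le_iff_exists.mp hjlt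
    have hyCent : y ∈ Cent := hCC_cent j hyCCj
    have hybr : ∀ a : A, a * y - y * a ∈ M := by
      intro a
      have := hCCbr j a y hyCCj
      rw [← hj] at this
      exact hk0 this
    set M' : Submodule K A := M ⊔ (K ∙ y) with hM'
    have hM'abl : Abl M' := by
      constructor
      · intro a m' hm'
        obtain ⟨m0, hm0, z, hz, rfl⟩ := Submodule.mem_sup.mp hm'
        obtain ⟨c, rfl⟩ := Submodule.mem_span_singleton.mp hz
        have hsplit : a * (m0 + c • y) - (m0 + c • y) * a
            = (a * m0 - m0 * a) + c • (a * y - y * a) := by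
          simp only [mul_add, add_mul, mul_smul_comm, smul_mul_assoc, smul_sub]
          abel
        rw [hsplit]
        exact Submodule.mem_sup_left
          (M.add_mem (hMabl.1 a m0 hm0) (M.smul_mem c (hybr a)))
      · intro x' hx' y' hy'
        obtain ⟨m1, hm1, z1, hz1, rfl⟩ := Submodule.mem_sup.mp hx'
        obtain ⟨c1, rfl⟩ := Submodule.mem_span_singleton.mp hz1
        obtain ⟨m2, hm2, z2, hz2, rfl⟩ := Submodule.mem_sup.mp hy'
        obtain ⟨c2, rfl⟩ := Submodule.mem_span_singleton.mp hz2
        have e12 : m1 * m2 = m2 * m1 := hMabl.2 m1 hm1 m2 hm2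
        have ey1 : y * m1 = m1 * y := hyCent m1 hm1
        have ey2 : y * m2 = m2 * y := hyCent m2 hm2
        simp only [mul_add, add_mul, mul_smul_comm, smul_mul_assoc, smul_smul]
        rw [e12, ey1, ey2]
        module
    have hlt : M < M' := by
      apply lt_of_le_of_ne le_sup_left
      intro h
      apply hyM
      rw [h]
      exact Submodule.mem_sup_right (Submodule.mem_span_singleton_self y)
    have := Submodule.finrank_lt_finrank_of_lt hlt
    have := hMmax M' hM'abl
    omega
  have hCentM : Cent = M := le_antisymm hCent_le hMC
  -- Step 7: the representation of A on M by commutators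
  have hMinv : ∀ a : A, ∀ x ∈ M,
      (LinearMap.mulLeft K a - LinearMap.mulRight K a) x ∈ M := by
    intro a x hx
    simpa using hMabl.1 a x hx
  set φ : A →ₗ[K] Module.End K M :=
    { toFun := fun a => (LinearMap.mulLeft K a - LinearMap.mulRight K a).restrict (hMinv a)
      map_add' := by
        intro a b
        ext x
        simp only [LinearMap.restrict_coe_apply, LinearMap.sub_apply,
          LinearMap.mulLeft_apply, LinearMap.mulRight_apply, LinearMap.add_apply,
          Submodule.coe_add, add_mul, mul_add]
        abel
      map_smul' := by
        intro c a
        ext x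
        simp only [LinearMap.restrict_coe_apply, LinearMap.sub_apply,
          LinearMap.mulLeft_apply, LinearMap.mulRight_apply, RingHom.id_apply,
          LinearMap.smul_apply, SetLike.val_smul, smul_mul_assoc, mul_smul_comm,
          smul_sub] } with hφ
  have hφ_coe : ∀ (a : A) (x : M), ((φ a x : M) : A) = a * x - x * a := by
    intro a x
    rfl
  have hφker : LinearMap.ker φ = M := by
    ext a
    constructor
    · intro ha
      rw [LinearMap.mem_ker] at ha
      rw [← hCentM, hCent_mem]
      intro y hy
      have := congrArg (fun f => ((f ⟨y, hy⟩ : M) : A)) ha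
      simp only [hφ_coe] at this
      have h0 : a * y - y * a = 0 := by simpa using this
      exact sub_eq_zero.mp h0
    · intro ha
      rw [LinearMap.mem_ker]
      ext x
      simp only [hφ_coe, LinearMap.zero_apply, ZeroMemClass.coe_zero]
      rw [sub_eq_zero]
      exact hMabl.2 a ha x x.2
  -- Step 8: the image is a nilpotent Lie algebra of endomorphisms
  have hbrD : ∀ d ∈ LinearMap.range φ, ∀ e ∈ LinearMap.range φ,
      d * e - e * d ∈ LinearMap.range φ := by
    rintro d ⟨a, rfl⟩ e ⟨b, rfl⟩
    refine ⟨a * b - b * a, ?_⟩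
    ext x
    have h1 : ((φ (a * b - b * a) x : M) : A) = (a * b - b * a) * x - x * (a * b - b * a) :=
      hφ_coe _ x
    have h2 : (((φ a * φ b - φ b * φ a) x : M) : A)
        = a * ((b * x - x * b)) - (b * x - x * b) * a
          - (b * (a * x - x * a) - (a * x - x * a) * b) := by
      simp only [LinearMap.sub_apply, Module.End.mul_apply, Submodule.coe_sub, hφ_coe]
    rw [h1, h2]
    simp only [mul_sub, sub_mul, mul_assoc]
    abel
  have hnilD : ∀ d ∈ LinearMap.range φ, IsNilpotent d := by
    rintro d ⟨a, rfl⟩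
    have hL : IsNilpotent (LinearMap.mulLeft K a) := by
      refine ⟨t, ?_⟩
      ext x
      rw [show t = (t - 1) + 1 by omega, mulLeft_pow_apply',
        htnil a (List.replicate (t - 1) a) (by simp; omega), zero_mul]
      rfl
    have hR : IsNilpotent (LinearMap.mulRight K a) := by
      refine ⟨t, ?_⟩
      ext x
      rw [mulRight_pow_apply',
        show List.replicate t a = a :: List.replicate (t - 1) a by
          rw [← List.replicate_succ]; congr 1; omega,
        List.foldl_cons, htnil (x * a) (List.replicate (t - 1) a) (by simp; omega)]
      rfl
    have had : IsNilpotent (LinearMap.mulLeft K a - LinearMap.mulRight K a) :=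
      (LinearMap.commute_mulLeft_right a a).isNilpotent_sub hL hR
    obtain ⟨k, hk⟩ := had
    refine ⟨k, ?_⟩
    ext x
    rw [show (φ a : Module.End K M)
      = (LinearMap.mulLeft K a - LinearMap.mulRight K a).restrict (hMinv a) from rfl]
    rw [Module.End.pow_restrict, LinearMap.restrict_coe_apply, hk]
    rfl
  -- Step 9: conclusion
  have hengel := engel_dim_bound K (finrank K M) M rfl (LinearMap.range φ) hbrD hnilD
  have hrn := LinearMap.finrank_range_add_finrank_ker φ
  have hkerrank : finrank K (LinearMap.ker φ) = finrank K M := by rw [hφker]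
  have hm_le : finrank K M ≤ n := lemma1 M hMabl.2
  have harith : finrank K M * (finrank K M - 1) + 2 * finrank K M
      = finrank K M * (finrank K M + 1) := by
    cases h : finrank K M with
    | zero => simp
    | succ s => simp only [Nat.succ_sub_one]; ring
  have hfin : 2 * finrank K A
      = 2 * finrank K (LinearMap.range φ) + 2 * finrank K (LinearMap.ker φ) := by omega
  rw [hfin, hkerrank]
  calc 2 * finrank K (LinearMap.range φ) + 2 * finrank K M
      ≤ finrank K M * (finrank K M - 1) + 2 * finrank K M := by omega
    _ = finrank K M * (finrank K M + 1) := harith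
    _ ≤ n * (n + 1) := Nat.mul_le_mul hm_le (by omega)
end

section
/- Let K be a finite field and let A be a finite-dimensional semisimple unital associative algebra over K. If every commutative (non-unital) subalgebra of A has dimension at most n, then 2 · dim A ≤ 9n. -/
open Module Finset

section Aux

variable {K : Type*} [Field K] {A : Type*} [Ring A] [Algebra K A]

/-- Composition with an `A`-linear iso on the left, as a `K`-linear equiv of hom spaces. -/
noncomputable def homCongrLeft {M₁ M₂ N : Submodule A A} (e : ↥M₁ ≃ₗ[A] ↥M₂) :
    (↥M₂ →ₗ[A] ↥N) ≃ₗ[K] (↥M₁ →ₗ[A] ↥N) where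
  toFun φ := φ ∘ₗ e.toLinearMap
  map_add' φ ψ := LinearMap.add_comp _ _ _
  map_smul' c φ := by ext x; rfl
  invFun φ := φ ∘ₗ e.symm.toLinearMap
  left_inv φ := by ext x; simp
  right_inv φ := by ext x; simp

/-- Composition with an `A`-linear iso on the right, as a `K`-linear equiv of hom spaces. -/
noncomputable def homCongrRight {M N₁ N₂ : Submodule A A} (e : ↥N₁ ≃ₗ[A] ↥N₂) :
    (↥M →ₗ[A] ↥N₁) ≃ₗ[K] (↥M →ₗ[A] ↥N₂) where
  toFun φ := e.toLinearMap ∘ₗ φ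
  map_add' φ ψ := LinearMap.comp_add _ _ _
  map_smul' c φ := by
    refine LinearMap.ext fun x => ?_
    exact e.toLinearMap.map_smul_of_tower c (φ x)
  invFun φ := e.symm.toLinearMap ∘ₗ φ
  left_inv φ := by ext x; simp
  right_inv φ := by ext x; simp

lemma fd_hom [FiniteDimensional K A] (M N : Submodule A A) :
    FiniteDimensional K (↥M →ₗ[A] ↥N) := by
  haveI : FiniteDimensional K ↥M :=
    FiniteDimensional.of_injective (M.subtype.restrictScalars K) Subtype.val_injective
  haveI : FiniteDimensional K ↥N :=
    FiniteDimensional.of_injective (N.subtype.restrictScalars K) Subtype.val_injective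
  exact FiniteDimensional.of_injective
    (LinearMap.restrictScalarsₗ K A ↥M ↥N K) (LinearMap.restrictScalars_injective K)

lemma fd_sub [FiniteDimensional K A] (M : Submodule A A) : FiniteDimensional K ↥M :=
  FiniteDimensional.of_injective (M.subtype.restrictScalars K) Subtype.val_injective

end Aux

section Master

variable (K : Type*) [Field K] [Finite K] (A : Type*) [Ring A] [Algebra K A]
  [FiniteDimensional K A]

set_option maxHeartbeats 2000000 in
theorem master {ι : Type*} [Fintype ι] [DecidableEq ι] (S : ι → Submodule A A)
    (hsimp : ∀ i, IsSimpleModule A ↥(S i))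
    (pr : ι → A →ₗ[A] A)
    (hmem : ∀ i a, pr i a ∈ S i)
    (hsum : ∀ a : A, ∑ i, pr i a = a)
    (hdelta : ∀ i l (x : A), x ∈ S l → pr i x = if i = l then x else 0)
    (n : ℕ)
    (hA : ∀ S' : NonUnitalSubalgebra K A, (∀ x ∈ S', ∀ y ∈ S', x * y = y * x) →
      Module.finrank K S' ≤ n) :
    2 * Module.finrank K A ≤ 9 * n := by
  classical
  haveI : ∀ i, IsSimpleModule A ↥(S i) := hsimp
  haveI : ∀ (M N : Submodule A A), FiniteDimensional K (↥M →ₗ[A] ↥N) := fd_hom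
  haveI : ∀ (M : Submodule A A), FiniteDimensional K ↥M := fd_sub
  -- basic component calculus
  have B0 : ∀ i (x : A), x ∈ S i → pr i x = x := fun i x hx => by
    rw [hdelta i i x hx, if_pos rfl]
  have B2 : ∀ i l (x : A), x ∈ S l → i ≠ l → pr i x = 0 := fun i l x hx h => by
    rw [hdelta i l x hx, if_neg h]
  -- the codomain-restricted projections
  let cpr : ∀ i, A →ₗ[A] ↥(S i) := fun i => (pr i).codRestrict (S i) (hmem i)
  have hcpr_coe : ∀ i a, ((cpr i a : ↥(S i)) : A) = pr i a := fun i a => rfl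
  have hcpr_same : ∀ i (x : ↥(S i)), cpr i (x : A) = x := fun i x =>
    Subtype.ext (B0 i x x.2)
  have hcpr_ne : ∀ {i l}, i ≠ l → ∀ (x : A), x ∈ S l → cpr i x = 0 := fun h x hx =>
    Subtype.ext (B2 _ _ x hx h)
  -- the isomorphism relation and class data
  let r : ι → ι → Prop := fun i j => Nonempty (↥(S i) ≃ₗ[A] ↥(S j))
  have rrefl : ∀ i, r i i := fun i => ⟨LinearEquiv.refl A _⟩
  have rsymm : ∀ {i j}, r i j → r j i := fun ⟨e⟩ => ⟨e.symm⟩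
  have rtrans : ∀ {i j l}, r i j → r j l → r i l := fun ⟨e⟩ ⟨f⟩ => ⟨e.trans f⟩
  let cls : ι → Finset ι := fun i => univ.filter (r i ·)
  let k : ι → ℕ := fun i => (cls i).card
  let d : ι → ℕ := fun i => finrank K (↥(S i) →ₗ[A] ↥(S i))
  have clseq : ∀ {i j}, r i j → cls i = cls j := by
    intro i j h
    ext l
    simp only [cls, mem_filter, mem_univ, true_and]
    exact ⟨fun h2 => rtrans (rsymm h) h2, fun h2 => rtrans h h2⟩
  have keq : ∀ {i j}, r i j → k i = k j := by
    intro i j h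
    show (cls i).card = (cls j).card
    rw [clseq h]
  have deq : ∀ {i j}, r i j → d i = d j := by
    intro i j ⟨e⟩
    show finrank K (↥(S i) →ₗ[A] ↥(S i)) = finrank K (↥(S j) →ₗ[A] ↥(S j))
    rw [(homCongrLeft (K := K) e).symm.finrank_eq, (homCongrRight (K := K) e).finrank_eq]
  have hzero : ∀ {i j} (φ : ↥(S i) →ₗ[A] ↥(S j)), ¬ r i j → φ = 0 := by
    intro i j φ h
    rcases φ.bijective_or_eq_zero with hb | h0
    · exact absurd ⟨LinearEquiv.ofBijective φ hb⟩ h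
    · exact h0
  have homdim : ∀ i j, finrank K (↥(S i) →ₗ[A] ↥(S j)) = if r i j then d j else 0 := by
    intro i j
    by_cases h : r i j
    · rw [if_pos h]
      obtain ⟨e⟩ := h
      exact ((homCongrLeft (K := K) e).finrank_eq).symm
    · rw [if_neg h]
      haveI : Subsingleton (↥(S i) →ₗ[A] ↥(S j)) :=
        ⟨fun φ ψ => by rw [hzero φ h, hzero ψ h]⟩
      exact finrank_zero_of_subsingleton
  -- dimension of each simple summand : m i = k i * d i
  have mEq : ∀ i, finrank K ↥(S i) = k i * d i := by
    intro i
    have equivEval : (A →ₗ[A] ↥(S i)) ≃ₗ[K] ↥(S i) :=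
      { toFun := fun φ => φ 1
        map_add' := fun φ ψ => rfl
        map_smul' := fun c φ => rfl
        invFun := fun x =>
          { toFun := fun a => a • x
            map_add' := fun a b => add_smul a b x
            map_smul' := fun a b => mul_smul a b x }
        left_inv := fun φ => by
          refine LinearMap.ext fun a => ?_
          show a • φ 1 = φ a
          rw [← map_smul, smul_eq_mul, mul_one]
        right_inv := fun x => one_smul A x }
    let L : (∀ j, ↥(S j) →ₗ[A] ↥(S i)) →ₗ[K] (A →ₗ[A] ↥(S i)) :=
      { toFun := fun Φ => ∑ j, (Φ j) ∘ₗ cpr j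
        map_add' := fun Φ Ψ => by
          rw [← Finset.sum_add_distrib]
          exact Finset.sum_congr rfl fun j _ => LinearMap.add_comp _ _ _
        map_smul' := fun c Φ => by
          rw [RingHom.id_apply, Finset.smul_sum]
          exact Finset.sum_congr rfl fun j _ => rfl }
    have hLinj : Function.Injective L := by
      rw [← LinearMap.ker_eq_bot, LinearMap.ker_eq_bot']
      intro Φ hΦ
      funext j
      refine LinearMap.ext fun x => ?_
      have h1 : (L Φ) (x : A) = 0 := by rw [hΦ]; rfl
      have h2 : (L Φ) (x : A) = Φ j x := by
        show (∑ l, (Φ l) ∘ₗ cpr l) (x : A) = Φ j x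
        rw [LinearMap.sum_apply]
        rw [Finset.sum_eq_single j]
        · rw [LinearMap.comp_apply, hcpr_same]
        · intro l _ hl
          rw [LinearMap.comp_apply, hcpr_ne hl (x : A) x.2, map_zero]
        · intro h; exact absurd (mem_univ j) h
      show Φ j x = (0 : ∀ l, ↥(S l) →ₗ[A] ↥(S i)) j x
      rw [← h2, h1]
      rfl
    have hLsurj : Function.Surjective L := by
      intro ψ
      refine ⟨fun j => ψ ∘ₗ (S j).subtype, ?_⟩
      refine LinearMap.ext fun a => ?_
      show (∑ l, (ψ ∘ₗ (S l).subtype) ∘ₗ cpr l) a = ψ a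
      rw [LinearMap.sum_apply]
      have : ∀ l, ((ψ ∘ₗ (S l).subtype) ∘ₗ cpr l) a = ψ (pr l a) := fun l => rfl
      simp_rw [this]
      rw [← map_sum, hsum]
    have e2 := LinearEquiv.ofBijective L ⟨hLinj, hLsurj⟩
    have dim1 : finrank K ↥(S i) = ∑ j, finrank K (↥(S j) →ₗ[A] ↥(S i)) := by
      rw [← equivEval.finrank_eq, ← e2.finrank_eq, finrank_pi_fintype]
    rw [dim1]
    have : ∀ j, finrank K (↥(S j) →ₗ[A] ↥(S i)) = if r i j then d i else 0 := by
      intro j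
      rw [homdim j i]
      by_cases h : r i j
      · rw [if_pos h, if_pos (rsymm h)]
      · rw [if_neg h, if_neg (fun h2 => h (rsymm h2))]
    simp_rw [this]
    rw [Finset.sum_ite, Finset.sum_const_zero, add_zero, Finset.sum_const, smul_eq_mul]
  -- dimension of A
  have dimA : finrank K A = ∑ i, k i * d i := by
    let L0 : (∀ i, ↥(S i)) →ₗ[K] A :=
      ∑ i, ((S i).subtype.restrictScalars K) ∘ₗ LinearMap.proj i
    have hL0 : ∀ x, L0 x = ∑ i, ((x i : ↥(S i)) : A) := by
      intro x
      show (∑ i, ((S i).subtype.restrictScalars K) ∘ₗ LinearMap.proj i) x = _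
      rw [LinearMap.sum_apply]
      rfl
    have hinj : Function.Injective L0 := by
      rw [← LinearMap.ker_eq_bot, LinearMap.ker_eq_bot']
      intro x hx
      funext j
      have h0 : pr j (L0 x) = 0 := by rw [hx, map_zero]
      rw [hL0, map_sum] at h0
      rw [Finset.sum_eq_single j] at h0
      · exact Subtype.ext (by rw [← B0 j (x j) (x j).2, h0]; rfl)
      · intro l _ hl
        exact B2 j l _ (x l).2 (Ne.symm hl)
      · intro h; exact absurd (mem_univ j) h
    have hsurj : Function.Surjective L0 := by
      intro a
      refine ⟨fun i => cpr i a, ?_⟩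
      rw [hL0]
      exact hsum a
    have e0 := LinearEquiv.ofBijective L0 ⟨hinj, hsurj⟩
    rw [e0.symm.finrank_eq, finrank_pi_fintype]
    exact Finset.sum_congr rfl fun i _ => mEq i
  -- commutativity of singleton isotypic components
  have honly : ∀ m, k m = 1 → ∀ i, r m i → i = m := by
    intro m hm i hi
    by_contra hne
    have h1 : i ∈ cls m := by simp only [cls, mem_filter, mem_univ, true_and]; exact hi
    have h2 : m ∈ cls m := by simp only [cls, mem_filter, mem_univ, true_and]; exact rrefl m
    have hsub : ({i, m} : Finset ι) ⊆ cls m := by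
      intro l hl
      rcases Finset.mem_insert.mp hl with h | h
      · subst h; exact h1
      · rw [Finset.mem_singleton.mp h]; exact h2
    have : 2 ≤ k m := by
      calc 2 = ({i, m} : Finset ι).card := (Finset.card_pair hne).symm
      _ ≤ (cls m).card := Finset.card_le_card hsub
    omega
  -- right multiplication by an element of `S m` as an `A`-linear map `S i → S m`
  let rmul : ∀ (i m : ι) (c : ↥(S m)), (↥(S i) →ₗ[A] ↥(S m)) := fun i m c =>
    { toFun := fun w => ⟨(w : A) * c, by rw [← smul_eq_mul]; exact (S m).smul_mem _ c.2⟩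
      map_add' := fun w w' => Subtype.ext (add_mul _ _ _)
      map_smul' := fun a w => Subtype.ext (by
        show ((a • w : ↥(S i)) : A) * c = a • ((w : A) * (c : A))
        rw [Submodule.coe_smul, smul_eq_mul, smul_eq_mul, mul_assoc]) }
  have rmulzero : ∀ {i m : ι}, ¬ r i m → ∀ (z : A), z ∈ S i → ∀ (c : ↥(S m)), z * c = 0 := by
    intro i m hr z hz c
    have h0 : rmul i m c = 0 := hzero _ hr
    have := congrArg Subtype.val (LinearMap.ext_iff.mp h0 ⟨z, hz⟩)
    exact this
  have singcomm : ∀ m, k m = 1 → ∀ x y : ↥(S m), (x : A) * y = (y : A) * x := by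
    intro m hm x y
    have hnr : ∀ i, i ≠ m → ¬ r i m := fun i hne hr => hne (honly m hm i (rsymm hr))
    have inj0 : ∀ c : ↥(S m), (∀ w : ↥(S m), (w : A) * c = 0) → c = 0 := by
      intro c hc
      have h1 : (c : A) = ∑ i, pr i 1 * c := by
        conv_lhs => rw [← one_mul (c : A), ← hsum 1, Finset.sum_mul]
      have hz : ∀ i ∈ univ, pr i 1 * (c : A) = 0 := by
        intro i _
        by_cases h : i = m
        · subst h; exact hc ⟨pr i 1, hmem i 1⟩
        · exact rmulzero (hnr i h) _ (hmem i 1) c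
      rw [Finset.sum_eq_zero hz] at h1
      exact Subtype.ext h1
    haveI : Finite ↥(S m) := Module.finite_of_finite K
    haveI : Finite (Module.End A ↥(S m)) :=
      Finite.of_injective (fun f => (f : ↥(S m) → ↥(S m))) DFunLike.coe_injective
    letI F : Field (Module.End A ↥(S m)) := littleWedderburn _
    let φ : ↥(S m) → Module.End A ↥(S m) := fun c => rmul m m c
    have φadd : ∀ a b : ↥(S m), φ (a + b) = φ a + φ b := by
      intro a b
      refine LinearMap.ext fun w => Subtype.ext ?_
      show (w : A) * ((a : A) + b) = (w : A) * a + (w : A) * b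
      rw [mul_add]
    have φinj : ∀ a b : ↥(S m), φ a = φ b → a = b := by
      intro a b h
      have h0 : φ (a - b) = 0 := by
        have e1 : φ (a - b) + φ b = φ a := by rw [← φadd, sub_add_cancel]
        rw [h] at e1
        exact add_right_cancel (e1.trans (zero_add (φ b)).symm)
      have : a - b = 0 := inj0 _ (fun w => by
        have := congrArg Subtype.val (LinearMap.ext_iff.mp h0 w)
        exact this)
      rw [← sub_eq_zero]; exact this
    have hmemxy : (x : A) * y ∈ S m := by
      rw [← smul_eq_mul]; exact (S m).smul_mem _ y.2
    have hmemyx : (y : A) * x ∈ S m := by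
      rw [← smul_eq_mul]; exact (S m).smul_mem _ x.2
    have φanti : ∀ (a b : ↥(S m)) (hab : (a : A) * b ∈ S m),
        φ ⟨(a : A) * b, hab⟩ = φ b * φ a := by
      intro a b hab
      refine LinearMap.ext fun w => Subtype.ext ?_
      show (w : A) * ((a : A) * b) = ((w : A) * a) * b
      rw [mul_assoc]
    have : φ ⟨(x : A) * y, hmemxy⟩ = φ ⟨(y : A) * x, hmemyx⟩ := by
      rw [φanti, φanti, F.mul_comm]
    have := φinj _ _ this
    exact congrArg Subtype.val this
  -- setoid and choice of the subsets of each isotypic class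
  letI st : Setoid ι := ⟨r, ⟨rrefl, fun h => rsymm h, fun h h' => rtrans h h'⟩⟩
  have hfibcls : ∀ i : ι, univ.filter (fun j => Quotient.mk st j = Quotient.mk st i) = cls i := by
    intro i
    ext j
    simp only [mem_filter, mem_univ, true_and, cls]
    rw [Quotient.eq]
    exact ⟨fun h => rsymm h, fun h => rsymm h⟩
  have hchoice : ∀ c : Quotient st, ∃ t : Finset ι,
      t ⊆ univ.filter (fun j => Quotient.mk st j = c) ∧
      t.card = (if (univ.filter (fun j => Quotient.mk st j = c)).card ≤ 1 then 0
        else (univ.filter (fun j => Quotient.mk st j = c)).card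
             - (univ.filter (fun j => Quotient.mk st j = c)).card / 2) := by
    intro c
    obtain ⟨t, h1, h2⟩ := Finset.exists_subset_card_eq
      (s := univ.filter (fun j => Quotient.mk st j = c))
      (n := if (univ.filter (fun j => Quotient.mk st j = c)).card ≤ 1 then 0
        else (univ.filter (fun j => Quotient.mk st j = c)).card
             - (univ.filter (fun j => Quotient.mk st j = c)).card / 2)
      (by split <;> omega)
    exact ⟨t, h1, h2⟩
  choose Pq hPq1 hPq2 using hchoice
  let P : Finset ι := univ.filter (fun p => p ∈ Pq (Quotient.mk st p))
  have hPint : ∀ i, (cls i) ∩ P = Pq (Quotient.mk st i) := by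
    intro i
    ext p
    simp only [mem_inter, mem_filter, mem_univ, true_and, cls, P]
    constructor
    · rintro ⟨h1, h2⟩
      have heq : Quotient.mk st p = Quotient.mk st i := Quotient.sound (rsymm h1)
      rwa [heq] at h2
    · intro hp
      have hmemf := hPq1 (Quotient.mk st i) hp
      rw [mem_filter] at hmemf
      have heq : Quotient.mk st p = Quotient.mk st i := hmemf.2
      exact ⟨rsymm (Quotient.exact heq), by rwa [heq]⟩
  have hacard : ∀ i, ((cls i) ∩ P).card = if k i ≤ 1 then 0 else k i - k i / 2 := by
    intro i
    rw [hPint i, hPq2]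
    simp only [hfibcls i]
    rfl
  have hPbig : ∀ p ∈ P, 2 ≤ k p := by
    intro p hp
    by_contra h
    have h1 : k p ≤ 1 := by omega
    have h2 : p ∈ cls p ∩ P := mem_inter.mpr
      ⟨by simp only [cls, mem_filter, mem_univ, true_and]; exact rrefl p, hp⟩
    have h3 := hacard p
    rw [if_pos h1, Finset.card_eq_zero] at h3
    rw [h3] at h2
    exact absurd h2 (Finset.notMem_empty p)
  -- the "matrix unit" elements
  let Θ : ∀ (j p : ι), (↥(S j) →ₗ[A] ↥(S p)) → A := fun j p φ => (φ (cpr j 1) : A)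
  have keyI : ∀ (j p : ι) (φ : ↥(S j) →ₗ[A] ↥(S p)) (a : A),
      a * Θ j p φ = (φ (cpr j a) : A) := by
    intro j p φ a
    have h1 : a • cpr j 1 = cpr j a := by
      rw [← map_smul, smul_eq_mul, mul_one]
    calc a * Θ j p φ = a • ((φ (cpr j 1)) : A) := by rw [smul_eq_mul]
    _ = ((a • φ (cpr j 1) : ↥(S p)) : A) := rfl
    _ = ((φ (a • cpr j 1) : ↥(S p)) : A) := by rw [map_smul]
    _ = (φ (cpr j a) : A) := by rw [h1]
  have Θmem : ∀ j p φ, Θ j p φ ∈ S p := fun j p φ => (φ (cpr j 1)).2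
  have Θzero : ∀ j p φ, Θ j p φ = 0 → φ = 0 := by
    intro j p φ h
    refine LinearMap.ext fun x => ?_
    have hk := keyI j p φ (x : A)
    rw [h, mul_zero, hcpr_same] at hk
    exact Subtype.ext hk.symm
  -- product lemmas
  have PP : ∀ (j p j' p' : ι) (φ : ↥(S j) →ₗ[A] ↥(S p)) (ψ : ↥(S j') →ₗ[A] ↥(S p')),
      j' ≠ p → Θ j p φ * Θ j' p' ψ = 0 := by
    intro j p j' p' φ ψ hne
    rw [keyI, hcpr_ne hne _ (Θmem j p φ), map_zero]
    rfl
  have CP : ∀ (m : ι), k m = 1 → ∀ (c : ↥(S m)) (j' p' : ι) (ψ : ↥(S j') →ₗ[A] ↥(S p')),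
      p' ∈ P → (c : A) * Θ j' p' ψ = 0 := by
    intro m hm c j' p' ψ hp'
    rw [keyI]
    by_cases h : j' = m
    · subst h
      have hnr : ¬ r j' p' := fun hr => by
        have h1 := keq hr
        have h2 := hPbig p' hp'
        omega
      rw [hzero ψ hnr]
      rfl
    · rw [hcpr_ne h _ c.2, map_zero]; rfl
  have PC : ∀ (j' p' : ι) (ψ : ↥(S j') →ₗ[A] ↥(S p')), p' ∈ P →
      ∀ (m : ι), k m = 1 → ∀ (c : ↥(S m)), Θ j' p' ψ * c = 0 := by
    intro j' p' ψ hp' m hm c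
    have hnr : ¬ r p' m := fun hr => by
      have h1 := keq hr
      have h2 := hPbig p' hp'
      omega
    exact rmulzero hnr _ (Θmem j' p' ψ) c
  have CC : ∀ (m m' : ι), k m = 1 → m ≠ m' → ∀ (c : ↥(S m)) (c' : ↥(S m')),
      (c : A) * c' = 0 := by
    intro m m' hm hne c c'
    have hnr : ¬ r m m' := fun hr => hne ((honly m hm m' hr).symm ▸ rfl)
    exact rmulzero hnr _ c.2 c'
  -- the big linear map
  let Jc := {j : ι // j ∉ P}
  let Pp := {p : ι // p ∈ P}
  let Qs := {m : ι // k m = 1}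
  let Dom := ((∀ (j : Jc) (p : Pp), (↥(S j.1) →ₗ[A] ↥(S p.1))) × (∀ m : Qs, ↥(S m.1)))
  let ev : ∀ (j p : ι), (↥(S j) →ₗ[A] ↥(S p)) →ₗ[K] ↥(S p) := fun j p =>
    { toFun := fun φ => φ (cpr j 1)
      map_add' := fun φ ψ => rfl
      map_smul' := fun c φ => rfl }
  let ΘL : ∀ (j p : ι), (↥(S j) →ₗ[A] ↥(S p)) →ₗ[K] A := fun j p =>
    ((S p).subtype.restrictScalars K) ∘ₗ ev j p
  let F1 : Dom →ₗ[K] A :=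
    ∑ j : Jc, ∑ p : Pp, (ΘL j.1 p.1) ∘ₗ
        (LinearMap.proj p) ∘ₗ (LinearMap.proj j) ∘ₗ (LinearMap.fst K _ _)
  let F2 : Dom →ₗ[K] A :=
    ∑ m : Qs, ((S m.1).subtype.restrictScalars K) ∘ₗ (LinearMap.proj m) ∘ₗ (LinearMap.snd K _ _)
  let Ψ : Dom →ₗ[K] A := F1 + F2
  have hΨ : ∀ x : Dom,
      Ψ x = (∑ j : Jc, ∑ p : Pp, Θ j.1 p.1 (x.1 j p)) + ∑ m : Qs, ((x.2 m) : A) := by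
    intro x
    show (F1 + F2) x = _
    rw [LinearMap.add_apply]
    congr 1
    · show (∑ j : Jc, ∑ p : Pp, (ΘL j.1 p.1) ∘ₗ
        (LinearMap.proj p) ∘ₗ (LinearMap.proj j) ∘ₗ (LinearMap.fst K _ _) : Dom →ₗ[K] A) x = _
      rw [LinearMap.sum_apply]
      refine Finset.sum_congr rfl fun j _ => ?_
      rw [LinearMap.sum_apply]
      rfl
    · show (∑ m : Qs, ((S m.1).subtype.restrictScalars K) ∘ₗ
        (LinearMap.proj m) ∘ₗ (LinearMap.snd K _ _) : Dom →ₗ[K] A) x = _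
      rw [LinearMap.sum_apply]
      rfl
  -- injectivity
  have hΨinj : Function.Injective Ψ := by
    rw [← LinearMap.ker_eq_bot, LinearMap.ker_eq_bot']
    intro x hx
    rw [hΨ] at hx
    have hcomp : ∀ i : ι, (∑ j : Jc, ∑ p : Pp, pr i (Θ j.1 p.1 (x.1 j p))) +
        (∑ m : Qs, pr i ((x.2 m : A))) = 0 := by
      intro i
      have h := congrArg (pr i) hx
      simpa only [map_add, map_sum, map_zero] using h
    have hc0 : ∀ m : Qs, x.2 m = 0 := by
      intro m
      have h := hcomp m.1
      have h1 : ∀ j : Jc, ∀ p : Pp, pr m.1 (Θ j.1 p.1 (x.1 j p)) = 0 := by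
        intro j p
        refine B2 m.1 p.1 _ (Θmem _ _ _) (fun heq => ?_)
        have h2 := hPbig p.1 p.2
        have h3 := m.2
        rw [heq] at h3
        omega
      rw [Finset.sum_eq_zero (fun j _ => Finset.sum_eq_zero (fun p _ => h1 j p)),
        zero_add, Finset.sum_eq_single m] at h
      · exact Subtype.ext (by rw [← B0 m.1 _ (x.2 m).2, h]; rfl)
      · intro m' _ hne
        exact B2 m.1 m'.1 _ (x.2 m').2 (fun heq => hne (Subtype.ext heq.symm))
      · intro h'; exact absurd (mem_univ m) h'
    have ht0 : ∀ (j₀ : Jc) (p₀ : Pp), x.1 j₀ p₀ = 0 := by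
      intro j₀ p₀
      have h := hcomp p₀.1
      have h2 : ∀ m : Qs, pr p₀.1 ((x.2 m : A)) = 0 := by
        intro m
        refine B2 p₀.1 m.1 _ (x.2 m).2 (fun heq => ?_)
        have h3 := hPbig p₀.1 p₀.2
        have h4 := m.2
        rw [← heq] at h4
        omega
      rw [Finset.sum_eq_zero (fun m _ => h2 m), add_zero] at h
      have hsum0 : ∑ j : Jc, Θ j.1 p₀.1 (x.1 j p₀) = 0 := by
        have hinner : ∀ j : Jc, ∑ p : Pp, pr p₀.1 (Θ j.1 p.1 (x.1 j p)) =
            Θ j.1 p₀.1 (x.1 j p₀) := by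
          intro j
          rw [Finset.sum_eq_single p₀]
          · exact B0 p₀.1 _ (Θmem _ _ _)
          · intro p _ hne
            exact B2 p₀.1 p.1 _ (Θmem _ _ _) (fun heq => hne (Subtype.ext heq.symm))
          · intro h'; exact absurd (mem_univ p₀) h'
        rw [Finset.sum_congr rfl (fun j _ => hinner j)] at h
        exact h
      have hmul := congrArg (fun z => pr j₀.1 1 * z) hsum0
      simp only [Finset.mul_sum, mul_zero] at hmul
      have hterm : ∀ j : Jc, pr j₀.1 1 * Θ j.1 p₀.1 (x.1 j p₀) =
          if j = j₀ then Θ j₀.1 p₀.1 (x.1 j₀ p₀) else 0 := by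
        intro j
        rw [keyI]
        by_cases hj : j = j₀
        · subst hj
          rw [if_pos rfl]
          have hc : cpr j.1 (pr j.1 1) = cpr j.1 1 := by
            have h5 := hcpr_same j.1 ⟨pr j.1 1, hmem j.1 1⟩
            rw [h5]
            exact Subtype.ext rfl
          rw [hc]
        · rw [if_neg hj, hcpr_ne (fun heq => hj (Subtype.ext heq)) _ (hmem j₀.1 1), map_zero]
          rfl
      rw [Finset.sum_congr rfl (fun j _ => hterm j), Finset.sum_ite_eq' univ j₀,
        if_pos (mem_univ _)] at hmul
      exact Θzero _ _ _ hmul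
    exact Prod.ext (funext fun j => funext fun p => ht0 j p) (funext hc0)
  -- multiplication on the range
  have hrange_mul : ∀ x y : Dom,
      Ψ x * Ψ y = ∑ m : Qs, ((x.2 m : A) * (y.2 m : A)) := by
    intro x y
    rw [hΨ x, hΨ y, add_mul, mul_add, mul_add]
    have hTT : (∑ j : Jc, ∑ p : Pp, Θ j.1 p.1 (x.1 j p)) *
        (∑ j' : Jc, ∑ p' : Pp, Θ j'.1 p'.1 (y.1 j' p')) = 0 := by
      rw [Finset.sum_mul]
      refine Finset.sum_eq_zero fun j _ => ?_
      rw [Finset.sum_mul]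
      refine Finset.sum_eq_zero fun p _ => ?_
      rw [Finset.mul_sum]
      refine Finset.sum_eq_zero fun j' _ => ?_
      rw [Finset.mul_sum]
      refine Finset.sum_eq_zero fun p' _ => ?_
      exact PP _ _ _ _ _ _ (fun h => j'.2 (h ▸ p.2))
    have hTC : (∑ j : Jc, ∑ p : Pp, Θ j.1 p.1 (x.1 j p)) *
        (∑ m : Qs, ((y.2 m) : A)) = 0 := by
      rw [Finset.sum_mul]
      refine Finset.sum_eq_zero fun j _ => ?_
      rw [Finset.sum_mul]
      refine Finset.sum_eq_zero fun p _ => ?_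
      rw [Finset.mul_sum]
      refine Finset.sum_eq_zero fun m _ => ?_
      exact PC j.1 p.1 _ p.2 m.1 m.2 (y.2 m)
    have hCT : (∑ m : Qs, ((x.2 m) : A)) *
        (∑ j : Jc, ∑ p : Pp, Θ j.1 p.1 (y.1 j p)) = 0 := by
      rw [Finset.sum_mul]
      refine Finset.sum_eq_zero fun m _ => ?_
      rw [Finset.mul_sum]
      refine Finset.sum_eq_zero fun j _ => ?_
      rw [Finset.mul_sum]
      refine Finset.sum_eq_zero fun p _ => ?_
      exact CP m.1 m.2 (x.2 m) j.1 p.1 _ p.2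
    have hCC : (∑ m : Qs, ((x.2 m) : A)) * (∑ m' : Qs, ((y.2 m') : A)) =
        ∑ m : Qs, ((x.2 m : A) * (y.2 m : A)) := by
      rw [Finset.sum_mul]
      refine Finset.sum_congr rfl fun m _ => ?_
      rw [Finset.mul_sum, Finset.sum_eq_single m]
      · intro m' _ hne
        exact CC m.1 m'.1 m.2 (fun heq => hne (Subtype.ext heq.symm)) (x.2 m) (y.2 m')
      · intro h'; exact absurd (mem_univ m) h'
    rw [hTT, hTC, hCT, hCC]
    simp
  have hmemmul : ∀ (m : ι) (u v : ↥(S m)), (u : A) * (v : A) ∈ S m := by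
    intro m u v
    rw [← smul_eq_mul]
    exact (S m).smul_mem _ v.2
  have hΨ0 : ∀ (c : ∀ m : Qs, ↥(S m.1)), Ψ (0, c) = ∑ m : Qs, ((c m : A)) := by
    intro c
    rw [hΨ]
    rw [Finset.sum_eq_zero, zero_add]
    intro j _
    refine Finset.sum_eq_zero fun p _ => ?_
    show ((0 : ↥(S j.1) →ₗ[A] ↥(S p.1)) (cpr j.1 1) : A) = 0
    rw [LinearMap.zero_apply]
    rfl
  have hclosed : ∀ x y : Dom, ∃ z : Dom, Ψ x * Ψ y = Ψ z ∧ Ψ y * Ψ x = Ψ z := by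
    intro x y
    refine ⟨(0, fun m => ⟨(x.2 m : A) * (y.2 m : A), hmemmul m.1 _ _⟩), ?_, ?_⟩
    · rw [hrange_mul x y, hΨ0]
    · rw [hrange_mul y x, hΨ0]
      exact Finset.sum_congr rfl fun m _ => singcomm m.1 m.2 (y.2 m) (x.2 m)
  -- the commutative subalgebra
  let W : Submodule K A := LinearMap.range Ψ
  let Walg : NonUnitalSubalgebra K A := W.toNonUnitalSubalgebra (by
    intro aa bb ha hb
    obtain ⟨x, rfl⟩ := ha
    obtain ⟨y, rfl⟩ := hb
    obtain ⟨z, hz, _⟩ := hclosed x y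
    rw [hz]
    exact ⟨z, rfl⟩)
  have hcommW : ∀ aa ∈ Walg, ∀ bb ∈ Walg, aa * bb = bb * aa := by
    intro aa ha bb hb
    have ha' : aa ∈ W := ha
    have hb' : bb ∈ W := hb
    obtain ⟨x, rfl⟩ := ha'
    obtain ⟨y, rfl⟩ := hb'
    obtain ⟨z, hz1, hz2⟩ := hclosed x y
    rw [hz1, hz2]
  have hWn : finrank K ↥W ≤ n := by
    have h := hA Walg hcommW
    exact h
  -- the dimension of W
  have hdim : finrank K ↥W =
      (∑ j : Jc, ∑ p : Pp, finrank K (↥(S j.1) →ₗ[A] ↥(S p.1))) +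
      ∑ m : Qs, finrank K ↥(S m.1) := by
    have h1 : finrank K ↥W = finrank K Dom := LinearMap.finrank_range_of_inj hΨinj
    rw [h1]
    show finrank K (_ × _) = _
    rw [finrank_prod, finrank_pi_fintype, finrank_pi_fintype]
    congr 1
    refine Finset.sum_congr rfl fun j _ => ?_
    rw [finrank_pi_fintype]
  have hsing : ∀ m, k m = 1 → m ∉ P := fun m hm hmem => by
    have := hPbig m hmem
    omega
  set av : ι → ℕ := fun i => ((cls i) ∩ P).card with hav
  set Fv : ι → ℕ := fun j => if j ∉ P then av j * d j + (if k j = 1 then d j else 0) else 0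
    with hFv
  have hdim2 : finrank K ↥W = ∑ j, Fv j := by
    rw [hdim]
    have hJ : (∑ j : Jc, ∑ p : Pp, finrank K (↥(S j.1) →ₗ[A] ↥(S p.1)))
        = ∑ j ∈ univ.filter (· ∉ P), av j * d j := by
      show (∑ j : {j // j ∉ P}, ∑ p : {p // p ∈ P}, finrank K (↥(S j.1) →ₗ[A] ↥(S p.1))) = _
      rw [Finset.sum_subtype (p := fun j => j ∉ P) (univ.filter (· ∉ P))
          (fun x => by simp) (fun j => av j * d j)]
      refine Finset.sum_congr rfl fun j _ => ?_
      show (∑ p : {x // x ∈ P}, finrank K (↥(S j.1) →ₗ[A] ↥(S p.1))) = _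
      rw [← Finset.sum_subtype (p := fun x => x ∈ P) P (fun x => Iff.rfl)
        (fun p => finrank K (↥(S j.1) →ₗ[A] ↥(S p)))]
      have he : ∀ p ∈ P, finrank K (↥(S j.1) →ₗ[A] ↥(S p)) = if r j.1 p then d j.1 else 0 := by
        intro p hp
        rw [homdim]
        by_cases hr : r j.1 p
        · rw [if_pos hr, if_pos hr, deq hr]
        · rw [if_neg hr, if_neg hr]
      rw [Finset.sum_congr rfl he, Finset.sum_ite, Finset.sum_const_zero, add_zero,
        Finset.sum_const, smul_eq_mul]
      have hPf : P.filter (fun p => r j.1 p) = cls j.1 ∩ P := by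
        ext p
        simp only [mem_filter, mem_inter, mem_univ, true_and, cls]
        exact ⟨fun h => ⟨h.2, h.1⟩, fun h => ⟨h.2, h.1⟩⟩
      rw [hPf]
    have hQ : (∑ m : Qs, finrank K ↥(S m.1)) = ∑ m ∈ univ.filter (fun m => k m = 1), d m := by
      show (∑ m : {m // k m = 1}, finrank K ↥(S m.1)) = _
      rw [Finset.sum_subtype (p := fun m => k m = 1) (univ.filter (fun m => k m = 1))
          (fun x => by simp) (fun m => d m)]
      refine Finset.sum_congr rfl fun m _ => ?_
      rw [mEq m.1, m.2, one_mul]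
    rw [hJ, hQ]
    have hsplit : ∑ j, Fv j = (∑ j ∈ univ.filter (· ∉ P), av j * d j) +
        ∑ j ∈ univ.filter (· ∉ P), (if k j = 1 then d j else 0) := by
      rw [← Finset.sum_add_distrib, Finset.sum_filter]
    have hlast : ∑ j ∈ univ.filter (· ∉ P), (if k j = 1 then d j else 0)
        = ∑ m ∈ univ.filter (fun m => k m = 1), d m := by
      rw [← Finset.sum_filter]
      congr 1
      ext m
      simp only [Finset.mem_filter, Finset.mem_univ, true_and]
      exact ⟨fun h => h.2, fun h => ⟨hsing m h, h⟩⟩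
    rw [hsplit, hlast]
  -- arithmetic per class
  have arith : ∀ κ δ α : ℕ, 1 ≤ κ → α = (if κ ≤ 1 then 0 else κ - κ / 2) →
      κ * (2 * (κ * δ)) ≤ (κ - α) * (9 * (α * δ + if κ = 1 then δ else 0)) := by
    intro κ δ α h1 h2
    by_cases hk1 : κ = 1
    · subst hk1
      rw [if_pos (le_refl 1)] at h2
      subst h2
      simp
      omega
    · have h3 : 2 ≤ κ := by omega
      rw [if_neg (by omega)] at h2
      rw [if_neg hk1]
      subst h2
      have h4 : κ - (κ - κ / 2) = κ / 2 := by omega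
      rw [h4, add_zero]
      have hdm := Nat.div_add_mod κ 2
      set q := κ / 2 with hq
      set rr := κ % 2 with hrr
      have h5 : κ - q = q + rr := by omega
      rw [h5]
      have h6 : 1 ≤ q := by omega
      have h7 : rr = 0 ∨ rr = 1 := by omega
      rcases h7 with h7 | h7
      · have hκ : κ = 2 * q := by omega
        rw [h7, hκ]
        nlinarith [Nat.zero_le (q * q * δ)]
      · have hκ : κ = 2 * q + 1 := by omega
        rw [h7, hκ]
        have h8 : q * 1 ≤ q * q := Nat.mul_le_mul_left q h6
        nlinarith [h8, h6, Nat.zero_le δ]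
  -- final counting
  have main : ∑ i, 2 * (k i * d i) ≤ ∑ i, 9 * Fv i := by
    rw [← Finset.sum_fiberwise univ (fun i => Quotient.mk st i) (fun i => 2 * (k i * d i)),
        ← Finset.sum_fiberwise univ (fun i => Quotient.mk st i) (fun i => 9 * Fv i)]
    refine Finset.sum_le_sum fun c _ => ?_
    rcases Finset.eq_empty_or_nonempty (univ.filter (fun i => Quotient.mk st i = c))
      with he | ⟨i₀, hi₀⟩
    · rw [he]
      simp
    · have hfib : univ.filter (fun i => Quotient.mk st i = c) = cls i₀ := by
        have hc : Quotient.mk st i₀ = c := (mem_filter.mp hi₀).2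
        rw [← hc, hfibcls]
      rw [hfib]
      have hri : ∀ j ∈ cls i₀, r i₀ j := by
        intro j hj
        simp only [cls, mem_filter, mem_univ, true_and] at hj
        exact hj
      have hk : ∀ j ∈ cls i₀, k j = k i₀ := fun j hj => (keq (hri j hj)).symm
      have hd : ∀ j ∈ cls i₀, d j = d i₀ := fun j hj => (deq (hri j hj)).symm
      have haj : ∀ j ∈ cls i₀, av j = av i₀ := by
        intro j hj
        rw [hav]
        simp only
        rw [clseq (hri j hj)]
      have hL : ∑ j ∈ cls i₀, 2 * (k j * d j) = (k i₀) * (2 * (k i₀ * d i₀)) := by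
        rw [Finset.sum_congr rfl (fun j hj => by rw [hk j hj, hd j hj]),
          Finset.sum_const, smul_eq_mul]
      have hR : ∑ j ∈ cls i₀, 9 * Fv j =
          (k i₀ - av i₀) * (9 * (av i₀ * d i₀ + if k i₀ = 1 then d i₀ else 0)) := by
        have hFj : ∀ j ∈ cls i₀, 9 * Fv j = if j ∈ P then 0
            else 9 * (av i₀ * d i₀ + if k i₀ = 1 then d i₀ else 0) := by
          intro j hj
          rw [hFv]
          simp only
          by_cases hjP : j ∈ P
          · rw [if_pos hjP, if_neg (fun h => h hjP)]
          · rw [if_neg hjP, if_pos hjP, haj j hj, hd j hj, hk j hj]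
        rw [Finset.sum_congr rfl hFj, Finset.sum_ite, Finset.sum_const_zero, zero_add,
          Finset.sum_const, smul_eq_mul]
        congr 2
        have hsd : (cls i₀).filter (fun j => ¬ j ∈ P) = cls i₀ \ P := by
          ext j
          simp [Finset.mem_sdiff]
        rw [hsd]
        have h2 : av i₀ = (cls i₀ ∩ P).card := rfl
        have h3 : k i₀ = (cls i₀).card := rfl
        have h4 := Finset.card_sdiff_add_card_inter (cls i₀) P
        omega
      rw [hL, hR]
      have hk1 : 1 ≤ k i₀ := Finset.card_pos.mpr ⟨i₀, by
        simp only [cls, mem_filter, mem_univ, true_and]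
        exact rrefl i₀⟩
      exact arith (k i₀) (d i₀) (av i₀) hk1 (hacard i₀)
  calc 2 * finrank K A = ∑ i, 2 * (k i * d i) := by rw [dimA, Finset.mul_sum]
  _ ≤ ∑ i, 9 * Fv i := main
  _ = 9 * ∑ i, Fv i := by rw [Finset.mul_sum]
  _ = 9 * finrank K ↥W := by rw [hdim2]
  _ ≤ 9 * n := Nat.mul_le_mul_left _ hWn

end Master

/-- If `A` is a finite-dimensional semisimple unital associative algebra over a finite field
`K` in which every commutative (non-unital) subalgebra has dimension at most `n`, then
`2 · dim A ≤ 9n`. -/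
theorem dim_le_of_semisimple_algebra_over_finite_field
    (K : Type*) [Field K] [Finite K] (A : Type*) [Ring A] [Algebra K A]
    [IsSemisimpleRing A] [FiniteDimensional K A] (n : ℕ)
    (hA : ∀ S : NonUnitalSubalgebra K A, (∀ x ∈ S, ∀ y ∈ S, x * y = y * x) →
      Module.finrank K S ≤ n) :
    2 * Module.finrank K A ≤ 9 * n := by
  classical
  have h5 : ∃ s : Set (Submodule A A), s.Finite ∧ sSupIndep s ∧ sSup s = ⊤ ∧
      ∀ m ∈ s, IsSimpleModule A ↥m :=
    ((IsSemisimpleModule.finite_tfae (R := A) (M := A)).out 0 4).mp (Module.Finite.self A)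
  obtain ⟨s, hfin, hindep, hsup, hsimple⟩ := h5
  haveI := hfin.fintype
  set S : s → Submodule A A := Subtype.val with hS
  have hind : iSupIndep S := (sSupIndep_iff s).mp hindep
  have hsup' : iSup S = ⊤ := by rw [← hsup, sSup_eq_iSup']
  have hInt := DirectSum.isInternal_submodule_of_iSupIndep_of_iSup_eq_top hind hsup'
  let E := LinearEquiv.ofBijective (DirectSum.coeLinearMap S) hInt
  let G : ((i : s) → ↥(S i)) ≃ₗ[A] A :=
    (DirectSum.linearEquivFunOnFintype A s fun i => ↥(S i)).symm ≪≫ₗ E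
  have hGsingle : ∀ (l : s) (y : ↥(S l)), G (Pi.single l y) = (y : A) := by
    intro l y
    show E ((DirectSum.linearEquivFunOnFintype A s fun i => ↥(S i)).symm (Pi.single l y)) = _
    rw [DirectSum.linearEquivFunOnFintype_symm_single]
    exact DirectSum.coeLinearMap_of S l y
  have hG : ∀ x, G x = ∑ i, (x i : A) := by
    intro x
    conv_lhs => rw [← Finset.univ_sum_single x, map_sum]
    exact Finset.sum_congr rfl fun i _ => hGsingle i (x i)
  let pr : s → A →ₗ[A] A := fun i =>
    (S i).subtype ∘ₗ (LinearMap.proj i) ∘ₗ (G.symm : A →ₗ[A] ((i : s) → ↥(S i)))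
  have hmem : ∀ i a, pr i a ∈ S i := fun i a => (G.symm a i).2
  have hsum : ∀ a : A, ∑ i, pr i a = a := by
    intro a
    have := hG (G.symm a)
    rw [G.apply_symm_apply] at this
    exact this.symm
  have hdelta : ∀ i l (x : A), x ∈ S l → pr i x = if i = l then x else 0 := by
    intro i l x hx
    have hsymm : G.symm x = Pi.single l ⟨x, hx⟩ := by
      rw [LinearEquiv.symm_apply_eq, hGsingle]
    show ((G.symm x i : ↥(S i)) : A) = _
    rw [hsymm]
    by_cases h : i = l
    · subst h; rw [Pi.single_eq_same]; simp
    · rw [Pi.single_eq_of_ne h, if_neg h]; rfl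
  haveI : ∀ i : s, IsSimpleModule A ↥(S i) := fun i => hsimple i i.2
  exact master K A S this pr hmem hsum hdelta n hA
end

section
/- Let K be a field and let 𝔤 be a finite-dimensional Lie algebra over K that is nilpotent of class at most 2 (i.e. ⁅⁅x, y⁆, z⁆ = 0 for all x, y, z ∈ 𝔤) and satisfies the condition 𝒜(n), i.e. every abelian Lie subalgebra of 𝔤 has dimension at most n. Then 4 · dim 𝔤 ≤ n² + 4n. -/
lemma four_mul_le_sq_add_aux (w z : ℕ) : 4 * (w * z) ≤ (z + w) ^ 2 := by
  have h := two_mul_le_add_sq z w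
  ring_nf
  ring_nf at h
  nlinarith [h]

/-- If `𝔤` is a finite-dimensional Lie algebra over a field `K` that is nilpotent of class at
most `2` and every abelian Lie subalgebra of `𝔤` has dimension at most `n`, then
`4 · dim 𝔤 ≤ n² + 4n`. -/
theorem dim_le_of_nilpotent_class_two_lie_algebra
    (K : Type*) [Field K] (L : Type*) [LieRing L] [LieAlgebra K L]
    [FiniteDimensional K L] (n : ℕ)
    (hclass2 : ∀ x y z : L, ⁅⁅x, y⁆, z⁆ = 0)
    (hA : ∀ H : LieSubalgebra K L, IsLieAbelian H → Module.finrank K H ≤ n) :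
    4 * Module.finrank K L ≤ n ^ 2 + 4 * n := by
  classical
  -- the set of dimensions of abelian subalgebras
  set S : Set ℕ := {m | ∃ H : LieSubalgebra K L, IsLieAbelian H ∧ Module.finrank K H = m} with hS
  have hbot : IsLieAbelian (⊥ : LieSubalgebra K L) := by
    constructor
    intro x y
    have hx : (x : L) = 0 := (LieSubalgebra.mem_bot (R := K) (x : L)).1 x.2
    ext
    simp [LieSubalgebra.coe_bracket, hx]
  have hne : S.Nonempty := ⟨_, ⊥, hbot, rfl⟩
  have hbdd : BddAbove S := ⟨n, by rintro m ⟨H, hH, rfl⟩; exact hA H hH⟩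
  obtain ⟨A, hAab, hArank⟩ : ∃ H : LieSubalgebra K L, IsLieAbelian H ∧
      Module.finrank K H = sSup S := Nat.sSup_mem hne hbdd
  have hAmax : ∀ H : LieSubalgebra K L, IsLieAbelian H →
      Module.finrank K H ≤ Module.finrank K A := by
    intro H hH
    rw [hArank]
    exact le_csSup hbdd ⟨H, hH, rfl⟩
  have hAcomm : ∀ a b : L, a ∈ A → b ∈ A → ⁅a, b⁆ = 0 := by
    intro a b ha hb
    have := hAab.trivial ⟨a, ha⟩ ⟨b, hb⟩
    exact congrArg Subtype.val this
  -- A is self-centralizing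
  have hself : ∀ x : L, (∀ a ∈ A, ⁅x, a⁆ = 0) → x ∈ A := by
    intro x hx
    set P : Submodule K L := A.toSubmodule ⊔ (K ∙ x) with hP
    have hzero : ∀ u ∈ P, ∀ v ∈ P, ⁅u, v⁆ = 0 := by
      intro u hu v hv
      obtain ⟨a, ha, u', hu', rfl⟩ := Submodule.mem_sup.1 hu
      obtain ⟨b, hb, v', hv', rfl⟩ := Submodule.mem_sup.1 hv
      obtain ⟨c, rfl⟩ := Submodule.mem_span_singleton.1 hu'
      obtain ⟨d, rfl⟩ := Submodule.mem_span_singleton.1 hv'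
      have h1 : ⁅a, b⁆ = 0 := hAcomm a b ha hb
      have h2 : ⁅x, b⁆ = 0 := hx b hb
      have h3 : ⁅a, (x : L)⁆ = 0 := by
        rw [← lie_skew, hx a ha, neg_zero]
      have h4 : ⁅x, x⁆ = 0 := lie_self x
      simp only [add_lie, lie_add, lie_smul, smul_lie, h1, h2, h3, h4,
        smul_zero, add_zero, zero_add]
    set A' : LieSubalgebra K L :=
      { toSubmodule := P
        lie_mem' := fun {u v} hu hv => by
          rw [hzero u hu v hv]; exact P.zero_mem } with hA'
    have hA'ab : IsLieAbelian A' := by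
      constructor
      intro u v
      ext
      exact hzero u.1 u.2 v.1 v.2
    have hle : A.toSubmodule ≤ A'.toSubmodule := le_sup_left
    have hrank : Module.finrank K A' ≤ Module.finrank K A := hAmax A' hA'ab
    have heq : A.toSubmodule = A'.toSubmodule :=
      Submodule.eq_of_le_of_finrank_le hle hrank
    have hxP : x ∈ A'.toSubmodule :=
      Submodule.mem_sup_right (Submodule.mem_span_singleton_self x)
    have : x ∈ A.toSubmodule := heq ▸ hxP
    exact this
  -- the center as a submodule
  set Z : Submodule K L :=
    { carrier := {z | ∀ y : L, ⁅z, y⁆ = 0}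
      add_mem' := fun hu hv y => by rw [add_lie, hu y, hv y, add_zero]
      zero_mem' := fun y => zero_lie y
      smul_mem' := fun c u hu y => by rw [smul_lie, hu y, smul_zero] } with hZ
  have hZA : Z ≤ A.toSubmodule := by
    intro z hz
    exact hself z (fun a _ => hz a)
  -- complement of Z inside A
  set ZA : Submodule K ↥A.toSubmodule := Z.comap A.toSubmodule.subtype with hZA'
  obtain ⟨WA, hWA⟩ := ZA.exists_isCompl
  set W : Submodule K L := WA.map A.toSubmodule.subtype with hW
  have hWle : W ≤ A.toSubmodule := by
    rintro w ⟨w', _, rfl⟩; exact w'.2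
  -- the key linear map
  set φ : L →ₗ[K] (↥W →ₗ[K] ↥Z) :=
    { toFun := fun x =>
        { toFun := fun w => ⟨⁅x, (w : L)⁆, fun y => hclass2 x w y⟩
          map_add' := fun u v => by ext; simp [lie_add]
          map_smul' := fun c u => by ext; simp [lie_smul] }
      map_add' := fun u v => by ext w; simp [add_lie]
      map_smul' := fun c u => by ext w; simp [smul_lie] } with hφ
  -- kernel of φ is contained in A
  have hker : LinearMap.ker φ ≤ A.toSubmodule := by
    intro x hx
    apply hself
    intro a ha
    have hsup : ZA ⊔ WA = ⊤ := hWA.sup_eq_top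
    have haA : (⟨a, ha⟩ : ↥A.toSubmodule) ∈ ZA ⊔ WA := by
      rw [hsup]; exact Submodule.mem_top
    obtain ⟨z, hz, w, hw, hzw⟩ := Submodule.mem_sup.1 haA
    have hzc : (z : L) ∈ Z := hz
    have hwW : (w : L) ∈ W := ⟨w, hw, rfl⟩
    have h0 : φ x = 0 := LinearMap.mem_ker.1 hx
    have hxw : ⁅x, (w : L)⁆ = 0 := by
      calc ⁅x, (w : L)⁆ = ((φ x) ⟨(w : L), hwW⟩ : L) := rfl
        _ = (((0 : ↥W →ₗ[K] ↥Z)) ⟨(w : L), hwW⟩ : L) := by rw [h0]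
        _ = 0 := rfl
    have hxz : ⁅x, (z : L)⁆ = 0 := by
      rw [← lie_skew, hzc x, neg_zero]
    have ha' : a = (z : L) + (w : L) := by
      have := congrArg Subtype.val hzw
      simpa using this.symm
    rw [ha', lie_add, hxw, hxz, add_zero]
  -- rank-nullity
  have hrn := LinearMap.finrank_range_add_finrank_ker φ
  have hkle : Module.finrank K (LinearMap.ker φ) ≤ Module.finrank K A :=
    Submodule.finrank_mono hker
  have hrle : Module.finrank K (LinearMap.range φ) ≤
      Module.finrank K W * Module.finrank K Z := by
    calc Module.finrank K (LinearMap.range φ)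
        ≤ Module.finrank K (↥W →ₗ[K] ↥Z) := Submodule.finrank_le _
      _ = Module.finrank K W * Module.finrank K Z := by
          rw [Module.finrank_linearMap]
  have hdim : Module.finrank K L ≤ Module.finrank K A +
      Module.finrank K W * Module.finrank K Z := by
    linarith
  -- finrank Z + finrank W = finrank A
  have hZcomap : Module.finrank K ZA = Module.finrank K Z := by
    rw [hZA']
    exact (Submodule.comapSubtypeEquivOfLe hZA).finrank_eq
  have hWmap : Module.finrank K WA = Module.finrank K W :=
    (Submodule.equivMapOfInjective _ (Submodule.injective_subtype _) WA).finrank_eq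
  have hsum : Module.finrank K Z + Module.finrank K W = Module.finrank K A := by
    rw [← hZcomap, ← hWmap]
    have := Submodule.finrank_add_eq_of_isCompl hWA
    exact this
  have haLe : Module.finrank K A ≤ n := hA A hAab
  -- arithmetic
  have h4 : 4 * (Module.finrank K W * Module.finrank K Z) ≤
      (Module.finrank K A) ^ 2 := by
    rw [← hsum]
    exact four_mul_le_sq_add_aux _ _
  have hsq : (Module.finrank K A) ^ 2 ≤ n ^ 2 := Nat.pow_le_pow_left haLe 2
  linarith
end
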